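/- arXiv:2511.20111 — 3 statements merged into one kernel-verified Lean document; each statement's English description precedes it below -/
import Mathlib

section
/- Let G be a weighted directed graph with n vertices, m edges, and positive real edge weights, let β ≥ 2 be an integer, and let H ⊆ TC(G) be a set of hopset edges (each (u, v) ∈ H weighted dist_G(u, v)) such that φ(H) > 0, where the potential is taken with respect to hopbound parameter β. Then there exists a pair (u, v) ∈ TC(G) with Δ((u, v) | H) ≥ φ(H) / (2 · exopt(n, m + |H|, ⌊β/2⌋)). -/
open scoped Classical

abbrev Edge (n : ℕ) := Fin n × Fin n

def IsPathList {n : ℕ} (E : Set (Edge n)) (l : List (Fin n)) : Prop :=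
  l.Nodup ∧ l.Chain' (fun a b => (a, b) ∈ E)

def IsPathFromTo {n : ℕ} (E : Set (Edge n)) (u v : Fin n) (l : List (Fin n)) : Prop :=
  IsPathList E l ∧ l.head? = some u ∧ l.getLast? = some v

def TCrel {n : ℕ} (E : Set (Edge n)) (u v : Fin n) : Prop :=
  u ≠ v ∧ ∃ l : List (Fin n), IsPathFromTo E u v l

def TCset {n : ℕ} (E : Set (Edge n)) : Set (Edge n) := {p | TCrel E p.1 p.2}

/-- The total weight of a path `l` under the weight function `w`. -/
def pathWeight {n : ℕ} (w : Edge n → ℝ) (l : List (Fin n)) : ℝ :=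
  ((l.zip l.tail).map w).sum

/-- `l` is a minimum-weight directed path from `s` to `t`. -/
def IsMinWeightPath {n : ℕ} (E : Set (Edge n)) (w : Edge n → ℝ) (s t : Fin n)
    (l : List (Fin n)) : Prop :=
  IsPathFromTo E s t l ∧ ∀ l', IsPathFromTo E s t l' → pathWeight w l ≤ pathWeight w l'

/-- The weighted distance: minimum total weight of a directed `s`–`t` path. -/
noncomputable def wdist {n : ℕ} (E : Set (Edge n)) (w : Edge n → ℝ) (s t : Fin n) : ℝ :=
  sInf {r : ℝ | ∃ l, IsPathFromTo E s t l ∧ pathWeight w l = r}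

/-- `hopdist E w s t`: the minimum number of edges among all minimum-weight `s`–`t` paths. -/
noncomputable def hopdist {n : ℕ} (E : Set (Edge n)) (w : Edge n → ℝ) (s t : Fin n) : ℕ :=
  sInf {k : ℕ | ∃ l, IsMinWeightPath E w s t l ∧ l.length = k + 1}

/-- The weight function of `G ∪ H`: each hopset edge `(u,v) ∈ H` is weighted `dist_G(u,v)`;
all other edges keep their original weight. -/
noncomputable def unionWeight {n : ℕ} (E : Set (Edge n)) (w : Edge n → ℝ) (H : Set (Edge n)) :
    Edge n → ℝ :=
  fun e => if e ∈ H then wdist E w e.1 e.2 else w e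

/-- `H ⊆ TC(G)` is an exact hopset with hopbound `β` for the weighted graph `(E, w)`. -/
def IsExactHopset {n : ℕ} (E : Set (Edge n)) (w : Edge n → ℝ) (H : Set (Edge n)) (β : ℕ) :
    Prop :=
  H ⊆ TCset E ∧ ∀ p ∈ TCset E, hopdist (E ∪ H) (unionWeight E w H) p.1 p.2 ≤ β

/-- `exopt N M β`: the least `h` such that every weighted directed graph with at most `N`
vertices, at most `M` edges and positive real edge weights admits an exact hopset of size
at most `h` with hopbound at most `β`. -/
noncomputable def exopt (N M β : ℕ) : ℕ :=
  sInf {h : ℕ | ∀ n' : ℕ, n' ≤ N → ∀ (E : Set (Edge n')) (w : Edge n' → ℝ),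
    E.ncard ≤ M → (∀ e ∈ E, 0 < w e) →
    ∃ H : Set (Edge n'), H.ncard ≤ h ∧ IsExactHopset E w H β}

/-- The (weighted) potential `φ(H)`: the sum of `hopdist_{G∪H}(s,t)` over all pairs `(s,t)`
in the transitive closure of `G` with `hopdist_{G∪H}(s,t) ≥ β`. -/
noncomputable def wpotential {n : ℕ} (E : Set (Edge n)) (w : Edge n → ℝ) (H : Set (Edge n))
    (β : ℕ) : ℕ :=
  ∑ p : Edge n,
    if TCrel E p.1 p.2 ∧ β ≤ hopdist (E ∪ H) (unionWeight E w H) p.1 p.2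
    then hopdist (E ∪ H) (unionWeight E w H) p.1 p.2 else 0

/-- `Δ((u,v) | H) = φ(H) - φ(H ∪ {(u,v)})` for the weighted potential. -/
noncomputable def wdelta {n : ℕ} (E : Set (Edge n)) (w : Edge n → ℝ) (H : Set (Edge n))
    (β : ℕ) (e : Edge n) : ℕ :=
  wpotential E w H β - wpotential E w (H ∪ {e}) β

/-!
Perturb the weights of `G ∪ H` by adding a tiny `δ` to every edge: shortest paths of the
perturbed graph are then exactly the fewest-hop shortest paths of `G ∪ H`. Take an optimal exact
hopset `F` with hopbound `⌊β/2⌋` for the perturbed graph, so `|F| ≤ exopt(n, m + |H|, ⌊β/2⌋)`.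
For a pair `(s, t)` with `d = hopdist_{G∪H}(s, t) ≥ β`, a shortest `s`–`t` route in `G ∪ H ∪ F`
has at most `⌊β/2⌋` edges, and replacing each edge `q` by a fewest-hop shortest path yields a
fewest-hop shortest path of `G ∪ H`, with `d` hops in total. Adding one `F`-edge `q` of the route
to `H` therefore saves `hopdist(q) - 1` hops on `(s, t)`, and these savings sum to at least
`d - ⌊β/2⌋ ≥ d/2`. Summing over pairs, `∑_{q ∈ F} Δ(q | H) ≥ φ(H)/2`, and some `q ∈ F` is at
least the average.
-/

variable {n : ℕ}

section Walks

def Reachable (E : Set (Edge n)) (u v : Fin n) : Prop := ∃ l, IsPathFromTo E u v l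

def IsWalkFromTo (E : Set (Edge n)) (u v : Fin n) (l : List (Fin n)) : Prop :=
  l.IsChain (fun a b => (a, b) ∈ E) ∧ l.head? = some u ∧ l.getLast? = some v

variable {E E₁ E₂ : Set (Edge n)} {u v x : Fin n} {l l₁ l₂ : List (Fin n)}

theorem List.exists_eq_append_of_mem_zip_tail {α : Type*} :
    ∀ {l : List α} {e : α × α}, e ∈ l.zip l.tail → ∃ l₁ l₂, l = l₁ ++ e.1 :: e.2 :: l₂
  | a :: b :: t, e, he => by
    simp only [List.tail_cons, List.zip_cons_cons, List.mem_cons] at he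
    rcases he with rfl | he
    · exact ⟨[], t, rfl⟩
    · obtain ⟨l₁, l₂, h⟩ := List.exists_eq_append_of_mem_zip_tail he
      exact ⟨a :: l₁, l₂, by rw [h]; rfl⟩

theorem List.IsChain.rel_of_mem_zip_tail {α : Type*} {R : α → α → Prop} {l : List α}
    (hl : l.IsChain R) {e : α × α} (he : e ∈ l.zip l.tail) : R e.1 e.2 := by
  obtain ⟨l₁, l₂, h⟩ := List.exists_eq_append_of_mem_zip_tail he
  exact List.isChain_iff_forall_rel_of_append_cons_cons.1 hl h

theorem List.Nodup.fst_ne_snd_of_mem_zip_tail {α : Type*} {l : List α} (hl : l.Nodup)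
    {e : α × α} (he : e ∈ l.zip l.tail) : e.1 ≠ e.2 := by
  obtain ⟨l₁, l₂, rfl⟩ := List.exists_eq_append_of_mem_zip_tail he
  have := (List.nodup_append.1 hl).2.1
  simp only [List.nodup_cons, List.mem_cons, not_or] at this
  exact this.1.1

theorem List.Nodup.zip_tail {α : Type*} {l : List α} (hl : l.Nodup) : (l.zip l.tail).Nodup :=
  List.Nodup.of_map Prod.snd <| by
    rw [List.map_snd_zip (by simp)]
    exact hl.sublist (List.tail_sublist l)

theorem IsPathFromTo.isWalkFromTo (h : IsPathFromTo E u v l) : IsWalkFromTo E u v l :=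
  ⟨h.1.2, h.2⟩

theorem IsWalkFromTo.ne_nil (h : IsWalkFromTo E u v l) : l ≠ [] := by
  rintro rfl
  simp [IsWalkFromTo] at h

theorem IsPathFromTo.ne_nil (h : IsPathFromTo E u v l) : l ≠ [] :=
  h.isWalkFromTo.ne_nil

theorem IsWalkFromTo.mono (hE : E₁ ⊆ E₂) (h : IsWalkFromTo E₁ u v l) : IsWalkFromTo E₂ u v l :=
  ⟨h.1.imp fun _ _ hab => hE hab, h.2⟩

theorem IsPathFromTo.mono (hE : E₁ ⊆ E₂) (h : IsPathFromTo E₁ u v l) : IsPathFromTo E₂ u v l :=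
  ⟨⟨h.1.1, h.1.2.imp fun _ _ hab => hE hab⟩, h.2⟩

theorem IsWalkFromTo.mem_of_mem_zip_tail (h : IsWalkFromTo E u v l) {e : Edge n}
    (he : e ∈ l.zip l.tail) : e ∈ E :=
  h.1.rel_of_mem_zip_tail he

theorem isWalkFromTo_singleton_iff : IsWalkFromTo E u v [x] ↔ x = u ∧ x = v := by
  simp [IsWalkFromTo]

theorem isWalkFromTo_cons_cons_iff {a b : Fin n} {t : List (Fin n)} :
    IsWalkFromTo E u v (a :: b :: t) ↔ a = u ∧ (a, b) ∈ E ∧ IsWalkFromTo E b v (b :: t) := by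
  simp only [IsWalkFromTo, List.isChain_cons_cons, List.head?_cons, Option.some.injEq,
    List.getLast?_cons_cons]
  tauto

theorem isPathFromTo_singleton (E : Set (Edge n)) (u : Fin n) : IsPathFromTo E u u [u] :=
  ⟨⟨List.nodup_singleton u, List.isChain_singleton u⟩, rfl, rfl⟩

theorem isWalkFromTo_pair {e : Edge n} (he : e ∈ E) : IsWalkFromTo E e.1 e.2 [e.1, e.2] :=
  ⟨List.isChain_pair.2 he, rfl, rfl⟩

theorem IsWalkFromTo.append (h₁ : IsWalkFromTo E u x l₁) (h₂ : IsWalkFromTo E x v l₂) :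
    IsWalkFromTo E u v (l₁ ++ l₂.tail) := by
  obtain ⟨c₁, hd₁, hl₁⟩ := h₁
  cases l₂ with
  | nil => exact absurd rfl h₂.ne_nil
  | cons b t =>
    obtain ⟨c₂, hd₂, hl₂⟩ := h₂
    obtain rfl : b = x := by simpa using hd₂
    refine ⟨List.isChain_append.2 ⟨c₁, c₂.tail, ?_⟩, ?_, ?_⟩
    · intro y hy z hz
      obtain rfl : b = y := by simpa [hl₁] using hy
      cases t with
      | nil => simp at hz
      | cons c t => exact (Option.mem_some_iff.1 hz) ▸ (List.isChain_cons_cons.1 c₂).1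
    · rwa [List.head?_append_of_ne_nil _ (by rintro rfl; simp at hd₁)]
    · cases t with
      | nil => simpa [← show b = v by simpa using hl₂] using hl₁
      | cons c t => rwa [List.tail_cons, List.getLast?_append_of_ne_nil _ (List.cons_ne_nil c t),
          ← List.getLast?_cons_cons]

theorem List.length_append_tail_add_one {α : Type*} {l₁ l₂ : List α} (h : l₂ ≠ []) :
    (l₁ ++ l₂.tail).length + 1 = l₁.length + l₂.length := by
  rw [List.length_append, add_assoc, List.length_tail_add_one _ (List.length_pos_iff.2 h)]

end Walks

section PathWeight

variable {E : Set (Edge n)} {u v x : Fin n} {l l₁ l₂ : List (Fin n)} {f g w : Edge n → ℝ}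

theorem pathWeight_singleton (f : Edge n → ℝ) (a : Fin n) : pathWeight f [a] = 0 := rfl

theorem pathWeight_cons_cons (f : Edge n → ℝ) (a b : Fin n) (t : List (Fin n)) :
    pathWeight f (a :: b :: t) = f (a, b) + pathWeight f (b :: t) := by
  simp [pathWeight]

theorem pathWeight_pair (f : Edge n → ℝ) (a b : Fin n) : pathWeight f [a, b] = f (a, b) := by
  simp [pathWeight]

theorem pathWeight_append_tail (f : Edge n → ℝ) :
    ∀ {l₁ l₂ : List (Fin n)}, l₁.getLast? = some x → l₂.head? = some x →
      pathWeight f (l₁ ++ l₂.tail) = pathWeight f l₁ + pathWeight f l₂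
  | [a], b :: t, h₁, h₂ => by
    obtain rfl : a = x := by simpa using h₁
    obtain rfl : b = a := by simpa using h₂
    simp [pathWeight_singleton]
  | a :: b :: l₁, l₂, h₁, h₂ => by
    rw [List.getLast?_cons_cons] at h₁
    rw [List.cons_append, List.cons_append, pathWeight_cons_cons, pathWeight_cons_cons,
      ← List.cons_append, pathWeight_append_tail f h₁ h₂, add_assoc]
  | [], _, h₁, _ => by simp at h₁
  | [_], [], _, h₂ => by simp at h₂

theorem pathWeight_congr (h : ∀ e ∈ l.zip l.tail, f e = g e) : pathWeight f l = pathWeight g l :=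
  congrArg List.sum (List.map_congr_left h)

theorem pathWeight_le_pathWeight (h : ∀ e ∈ l.zip l.tail, f e ≤ g e) :
    pathWeight f l ≤ pathWeight g l :=
  List.sum_le_sum h

theorem pathWeight_nonneg (h : ∀ e ∈ l.zip l.tail, 0 ≤ f e) : 0 ≤ pathWeight f l :=
  List.sum_nonneg fun x hx => by
    obtain ⟨e, he, rfl⟩ := List.mem_map.1 hx
    exact h e he

theorem pathWeight_add (f g : Edge n → ℝ) (l : List (Fin n)) :
    pathWeight (fun e => f e + g e) l = pathWeight f l + pathWeight g l :=
  List.sum_map_add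

theorem pathWeight_const_mul (c : ℝ) (f : Edge n → ℝ) (l : List (Fin n)) :
    pathWeight (fun e => c * f e) l = c * pathWeight f l :=
  List.sum_map_mul_left _ _ _

theorem pathWeight_add_const (f : Edge n → ℝ) (c : ℝ) (hl : l ≠ []) :
    pathWeight (fun e => f e + c) l = pathWeight f l + c * ((l.length : ℝ) - 1) := by
  obtain ⟨a, t, rfl⟩ := List.exists_cons_of_ne_nil hl
  rw [pathWeight_add]
  simp [pathWeight, mul_comm]

theorem pathWeight_eq_sum (hl : l.Nodup) (f : Edge n → ℝ) :
    pathWeight f l = ∑ e ∈ (l.zip l.tail).toFinset, f e :=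
  (List.sum_toFinset f hl.zip_tail).symm

theorem pathWeight_eq_pathWeight_iff_of_le (hl : l.Nodup) (h : ∀ e ∈ l.zip l.tail, f e ≤ g e) :
    pathWeight f l = pathWeight g l ↔ ∀ e ∈ l.zip l.tail, f e = g e := by
  rw [pathWeight_eq_sum hl, pathWeight_eq_sum hl,
    Finset.sum_eq_sum_iff_of_le fun e he => h e (List.mem_toFinset.1 he)]
  simp only [List.mem_toFinset]

theorem pathWeight_add_eq_of_forall_ne {q : Edge n} (hl : l.Nodup) (hq : q ∈ l.zip l.tail)
    (h : ∀ e ∈ l.zip l.tail, e ≠ q → f e = g e) :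
    pathWeight f l + g q = pathWeight g l + f q := by
  have hq' := List.mem_toFinset.2 hq
  rw [pathWeight_eq_sum hl, pathWeight_eq_sum hl, ← Finset.add_sum_erase _ f hq',
    ← Finset.add_sum_erase _ g hq', Finset.sum_congr rfl fun e he =>
      h e (List.mem_toFinset.1 (Finset.mem_of_mem_erase he)) (Finset.ne_of_mem_erase he)]
  ring

theorem IsWalkFromTo.pathWeight_nonneg (hw : ∀ e ∈ E, 0 ≤ w e) (h : IsWalkFromTo E u v l) :
    0 ≤ pathWeight w l :=
  _root_.pathWeight_nonneg fun e he => hw e (h.mem_of_mem_zip_tail he)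

end PathWeight

section Distances

variable {E E₁ E₂ : Set (Edge n)} {w w₁ w₂ : Edge n → ℝ} {u v : Fin n} {l : List (Fin n)}

theorem IsWalkFromTo.exists_isPathFromTo (hw : ∀ e ∈ E, 0 ≤ w e) (h : IsWalkFromTo E u v l) :
    ∃ p, IsPathFromTo E u v p ∧ pathWeight w p ≤ pathWeight w l ∧ p.length ≤ l.length ∧ p ⊆ l := by
  induction hN : l.length using Nat.strong_induction_on generalizing l u with
  | _ N ih =>
  subst hN
  obtain ⟨a, _ | ⟨b, t⟩, rfl⟩ := List.exists_cons_of_ne_nil h.ne_nil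
  · obtain ⟨rfl, rfl⟩ := isWalkFromTo_singleton_iff.1 h
    exact ⟨[a], isPathFromTo_singleton E a, le_rfl, le_rfl, List.Subset.refl _⟩
  obtain ⟨rfl, hab, hrest⟩ := isWalkFromTo_cons_cons_iff.1 h
  by_cases ha : a ∈ b :: t
  · -- cut out the cycle `a :: r₁ ++ [a]`
    obtain ⟨r₁, r₂, hr⟩ := List.append_of_mem ha
    have hsplit : a :: b :: t = (a :: r₁ ++ [a]) ++ (a :: r₂).tail := by simp [hr]
    have hcycle : IsWalkFromTo E a a (a :: r₁ ++ [a]) :=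
      ⟨h.1.infix ⟨[], r₂, by simp [hr]⟩, rfl, List.getLast?_concat⟩
    have hsuffix : IsWalkFromTo E a v (a :: r₂) :=
      ⟨h.1.infix ⟨a :: r₁, [], by simp [hr]⟩, rfl, by
        rw [← h.2.2, hr, ← List.cons_append,
          List.getLast?_append_of_ne_nil _ (List.cons_ne_nil _ _)]⟩
    obtain ⟨p, hp, hpw, hpl, hps⟩ := ih _ (by rw [hr]; simp) hsuffix rfl
    refine ⟨p, hp, ?_, hpl.trans (by rw [hr]; simp; omega), fun y hy => ?_⟩
    · rw [hsplit, pathWeight_append_tail w (x := a) List.getLast?_concat rfl]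
      linarith [hcycle.pathWeight_nonneg hw]
    · rcases List.mem_cons.1 (hps hy) with rfl | hy
      · exact List.mem_cons_self
      · exact List.mem_cons_of_mem _ (hr ▸ List.mem_append_right _ (List.mem_cons_of_mem _ hy))
  · obtain ⟨p, hp, hpw, hpl, hps⟩ := ih _ (by simp) hrest rfl
    obtain ⟨b', p', rfl⟩ := List.exists_cons_of_ne_nil hp.ne_nil
    obtain rfl : b' = b := by simpa using hp.2.1
    refine ⟨a :: b' :: p', ⟨⟨List.nodup_cons.2 ⟨fun h' => ha (hps h'), hp.1.1⟩,
      List.isChain_cons_cons.2 ⟨hab, hp.1.2⟩⟩, rfl, ?_⟩, ?_, ?_, List.cons_subset_cons a hps⟩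
    · rw [List.getLast?_cons_cons]; exact hp.2.2
    · rw [pathWeight_cons_cons, pathWeight_cons_cons]; linarith
    · simp only [List.length_cons] at hpl ⊢; omega

theorem IsWalkFromTo.reachable (h : IsWalkFromTo E u v l) : Reachable E u v :=
  let ⟨p, hp, _⟩ := h.exists_isPathFromTo (w := fun _ => 0) fun _ _ => le_rfl
  ⟨p, hp⟩

theorem Reachable.mono (hE : E₁ ⊆ E₂) (h : Reachable E₁ u v) : Reachable E₂ u v :=
  let ⟨l, hl⟩ := h
  ⟨l, hl.mono hE⟩

theorem setOf_isPathList_finite (E : Set (Edge n)) : {l | IsPathList E l}.Finite :=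
  (List.finite_length_le (Fin n) n).subset fun l hl => by simpa using hl.1.length_le_card

theorem setOf_isPathFromTo_finite (E : Set (Edge n)) (u v : Fin n) :
    {l | IsPathFromTo E u v l}.Finite :=
  (setOf_isPathList_finite E).subset fun _ hl => hl.1

theorem IsPathFromTo.length_le (h : IsPathFromTo E u v l) : l.length ≤ n := by
  simpa using h.1.1.length_le_card

theorem wdist_eq_sInf_image (E : Set (Edge n)) (w : Edge n → ℝ) (u v : Fin n) :
    wdist E w u v = sInf (pathWeight w '' {l | IsPathFromTo E u v l}) :=
  rfl

theorem wdist_le (h : IsPathFromTo E u v l) : wdist E w u v ≤ pathWeight w l := by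
  rw [wdist_eq_sInf_image]
  exact csInf_le ((setOf_isPathFromTo_finite E u v).image _).bddBelow ⟨l, h, rfl⟩

theorem le_wdist {c : ℝ} (hr : Reachable E u v)
    (h : ∀ l, IsPathFromTo E u v l → c ≤ pathWeight w l) : c ≤ wdist E w u v := by
  obtain ⟨l₀, hl₀⟩ := hr
  rw [wdist_eq_sInf_image]
  refine le_csInf ⟨_, l₀, hl₀, rfl⟩ ?_
  rintro r ⟨l, hl, rfl⟩
  exact h l hl

theorem IsPathFromTo.isMinWeightPath (h : IsPathFromTo E u v l)
    (hw : pathWeight w l ≤ wdist E w u v) : IsMinWeightPath E w u v l :=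
  ⟨h, fun _ h' => hw.trans (wdist_le h')⟩

theorem Reachable.exists_isMinWeightPath (h : Reachable E u v) :
    ∃ l, IsMinWeightPath E w u v l :=
  Set.exists_min_image _ (pathWeight w) (setOf_isPathFromTo_finite E u v) h

theorem IsMinWeightPath.pathWeight_eq (h : IsMinWeightPath E w u v l) :
    pathWeight w l = wdist E w u v :=
  le_antisymm (le_wdist ⟨l, h.1⟩ h.2) (wdist_le h.1)

theorem IsMinWeightPath.hopdist_succ_le (h : IsMinWeightPath E w u v l) :
    hopdist E w u v + 1 ≤ l.length := by
  have := List.length_pos_iff.2 h.1.ne_nil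
  have : hopdist E w u v ≤ l.length - 1 := Nat.sInf_le ⟨l, h, by omega⟩
  omega

theorem Reachable.exists_minHop (E : Set (Edge n)) (w : Edge n → ℝ) (h : Reachable E u v) :
    ∃ l, IsMinWeightPath E w u v l ∧ l.length = hopdist E w u v + 1 := by
  obtain ⟨l, hl⟩ := h.exists_isMinWeightPath (w := w)
  have := List.length_pos_iff.2 hl.1.ne_nil
  exact Nat.sInf_mem (s := {k | ∃ l, IsMinWeightPath E w u v l ∧ l.length = k + 1})
    ⟨l.length - 1, l, hl, by omega⟩

theorem Reachable.hopdist_lt (w : Edge n → ℝ) (h : Reachable E u v) : hopdist E w u v < n := by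
  obtain ⟨l, hl, hlen⟩ := h.exists_minHop E w
  have := hl.1.length_le
  omega

theorem IsWalkFromTo.wdist_le (hw : ∀ e ∈ E, 0 ≤ w e) (h : IsWalkFromTo E u v l) :
    wdist E w u v ≤ pathWeight w l := by
  obtain ⟨_, hp, hpw, _⟩ := h.exists_isPathFromTo hw
  exact (_root_.wdist_le hp).trans hpw

theorem IsWalkFromTo.hopdist_succ_le (hw : ∀ e ∈ E, 0 ≤ w e) (h : IsWalkFromTo E u v l)
    (hl : pathWeight w l ≤ wdist E w u v) : hopdist E w u v + 1 ≤ l.length := by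
  obtain ⟨_, hp, hpw, hpl, _⟩ := h.exists_isPathFromTo hw
  exact ((hp.isMinWeightPath (hpw.trans hl)).hopdist_succ_le).trans hpl

theorem wdist_le_of_mem (hw : ∀ e ∈ E, 0 ≤ w e) {e : Edge n} (he : e ∈ E) :
    wdist E w e.1 e.2 ≤ w e := by
  simpa [pathWeight_pair] using (isWalkFromTo_pair he).wdist_le hw

theorem wdist_le_wdist_of_subset (hE : E₁ ⊆ E₂) (hw : ∀ e ∈ E₁, w₂ e ≤ w₁ e)
    (h : Reachable E₁ u v) : wdist E₂ w₂ u v ≤ wdist E₁ w₁ u v := by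
  obtain ⟨l, hl⟩ := h.exists_isMinWeightPath (w := w₁)
  calc wdist E₂ w₂ u v ≤ pathWeight w₂ l := wdist_le (hl.1.mono hE)
    _ ≤ pathWeight w₁ l :=
      pathWeight_le_pathWeight fun e he => hw e (hl.1.isWalkFromTo.mem_of_mem_zip_tail he)
    _ = wdist E₁ w₁ u v := hl.pathWeight_eq

end Distances

section Expansion

variable {E E₁ E₂ : Set (Edge n)} {w : Edge n → ℝ} {u v : Fin n} {l : List (Fin n)}

theorem IsWalkFromTo.exists_expand (σ : Edge n → List (Fin n))
    (hσ : ∀ e ∈ E₂, IsWalkFromTo E₁ e.1 e.2 (σ e)) (hl : IsWalkFromTo E₂ u v l) :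
    ∃ lw, IsWalkFromTo E₁ u v lw ∧
      (∀ f, pathWeight f lw = pathWeight (fun e => pathWeight f (σ e)) l) ∧
      (lw.length : ℝ) = 1 + pathWeight (fun e => ((σ e).length : ℝ) - 1) l := by
  induction l generalizing u with
  | nil => exact absurd rfl hl.ne_nil
  | cons a t ih =>
    cases t with
    | nil =>
      obtain ⟨rfl, rfl⟩ := isWalkFromTo_singleton_iff.1 hl
      exact ⟨[a], ⟨List.isChain_singleton a, rfl, rfl⟩, fun _ => rfl, by simp [pathWeight]⟩
    | cons b t =>
      obtain ⟨rfl, hab, hrest⟩ := isWalkFromTo_cons_cons_iff.1 hl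
      obtain ⟨lw, hlw, hlwf, hlwl⟩ := ih hrest
      have hσab := hσ _ hab
      refine ⟨σ (a, b) ++ lw.tail, hσab.append hlw, fun f => ?_, ?_⟩
      · rw [pathWeight_append_tail f hσab.2.2 hlw.2.1, hlwf, pathWeight_cons_cons]
      · have := List.length_append_tail_add_one (l₁ := σ (a, b)) hlw.ne_nil
        rw [pathWeight_cons_cons]
        have : ((σ (a, b) ++ lw.tail).length : ℝ) + 1 = (σ (a, b)).length + lw.length := by
          exact_mod_cast this
        linarith

noncomputable def minHopPath (E : Set (Edge n)) (w : Edge n → ℝ) (u v : Fin n) : List (Fin n) :=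
  if h : Reachable E u v then (h.exists_minHop E w).choose else [u]

theorem Reachable.isMinWeightPath_minHopPath (h : Reachable E u v) :
    IsMinWeightPath E w u v (minHopPath E w u v) := by
  rw [minHopPath, dif_pos h]
  exact (h.exists_minHop E w).choose_spec.1

theorem Reachable.length_minHopPath (h : Reachable E u v) :
    (minHopPath E w u v).length = hopdist E w u v + 1 := by
  rw [minHopPath, dif_pos h]
  exact (h.exists_minHop E w).choose_spec.2

theorem IsWalkFromTo.exists_expand_minHop (hE : ∀ e ∈ E₂, Reachable E e.1 e.2)
    (hl : IsWalkFromTo E₂ u v l) :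
    ∃ lw, IsWalkFromTo E u v lw ∧
      pathWeight w lw = pathWeight (fun e => wdist E w e.1 e.2) l ∧
      (lw.length : ℝ) = 1 + pathWeight (fun e => (hopdist E w e.1 e.2 : ℝ)) l := by
  obtain ⟨lw, hlw, hlwf, hlwl⟩ := hl.exists_expand (fun e => minHopPath E w e.1 e.2)
    (fun e he => (hE e he).isMinWeightPath_minHopPath.1.isWalkFromTo)
  refine ⟨lw, hlw, (hlwf w).trans (pathWeight_congr fun e he => ?_),
    hlwl.trans (congrArg _ (pathWeight_congr fun e he => ?_))⟩
  · exact (hE e (hl.mem_of_mem_zip_tail he)).isMinWeightPath_minHopPath.pathWeight_eq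
  · rw [(hE e (hl.mem_of_mem_zip_tail he)).length_minHopPath]
    push_cast
    ring

theorem wdist_le_wdist_of_forall_wdist_le {w₁ w₂ : Edge n → ℝ} (hw₁ : ∀ e ∈ E₁, 0 ≤ w₁ e)
    (hE : ∀ e ∈ E₂, Reachable E₁ e.1 e.2 ∧ wdist E₁ w₁ e.1 e.2 ≤ w₂ e)
    (h : Reachable E₂ u v) : wdist E₁ w₁ u v ≤ wdist E₂ w₂ u v := by
  refine le_wdist h fun l hl => ?_
  obtain ⟨lw, hlw, hlww, -⟩ := hl.isWalkFromTo.exists_expand_minHop (w := w₁)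
    fun e he => (hE e he).1
  calc wdist E₁ w₁ u v ≤ pathWeight w₁ lw := hlw.wdist_le hw₁
    _ = pathWeight (fun e => wdist E₁ w₁ e.1 e.2) l := hlww
    _ ≤ pathWeight w₂ l := pathWeight_le_pathWeight fun e he =>
      (hE e (hl.isWalkFromTo.mem_of_mem_zip_tail he)).2

end Expansion

section Union

variable {E H H₁ H₂ : Set (Edge n)} {w : Edge n → ℝ} {u v : Fin n} {e : Edge n}

theorem unionWeight_of_mem (h : e ∈ H) : unionWeight E w H e = wdist E w e.1 e.2 := if_pos h

theorem unionWeight_of_notMem (h : e ∉ H) : unionWeight E w H e = w e := if_neg h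

theorem wdist_nonneg (hw : ∀ e ∈ E, 0 ≤ w e) : 0 ≤ wdist E w u v :=
  Real.sInf_nonneg fun _ ⟨_, hl, hr⟩ => hr ▸ hl.isWalkFromTo.pathWeight_nonneg hw

theorem unionWeight_nonneg (hw : ∀ e ∈ E, 0 ≤ w e) (he : e ∈ E ∪ H) :
    0 ≤ unionWeight E w H e := by
  by_cases heH : e ∈ H
  · rw [unionWeight_of_mem heH]; exact wdist_nonneg hw
  · rw [unionWeight_of_notMem heH]; exact hw e (he.resolve_right heH)

theorem unionWeight_le (hw : ∀ e ∈ E, 0 ≤ w e) (he : e ∈ E) : unionWeight E w H e ≤ w e := by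
  by_cases heH : e ∈ H
  · rw [unionWeight_of_mem heH]; exact wdist_le_of_mem hw he
  · rw [unionWeight_of_notMem heH]

theorem reachable_of_mem_union (hH : H ⊆ TCset E) (he : e ∈ E ∪ H) : Reachable E e.1 e.2 :=
  he.elim (fun heE => (isWalkFromTo_pair heE).reachable) fun heH => (hH heH).2

theorem wdist_le_unionWeight (hw : ∀ e ∈ E, 0 ≤ w e) (he : e ∈ E ∪ H) :
    wdist E w e.1 e.2 ≤ unionWeight E w H e := by
  by_cases heH : e ∈ H
  · exact (unionWeight_of_mem heH).ge
  · exact (unionWeight_of_notMem heH).symm ▸ wdist_le_of_mem hw (he.resolve_right heH)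

theorem reachable_union_iff (hH : H ⊆ TCset E) : Reachable (E ∪ H) u v ↔ Reachable E u v := by
  refine ⟨fun ⟨l, hl⟩ => ?_, Reachable.mono Set.subset_union_left⟩
  obtain ⟨lw, hlw, -⟩ := hl.isWalkFromTo.exists_expand_minHop (w := fun _ => 0)
    fun _ he => reachable_of_mem_union hH he
  exact hlw.reachable

theorem wdist_eq_zero_of_not_reachable (h : ¬ Reachable E u v) : wdist E w u v = 0 := by
  have : {l | IsPathFromTo E u v l} = ∅ := Set.eq_empty_of_forall_notMem fun l hl => h ⟨l, hl⟩
  rw [wdist_eq_sInf_image, this, Set.image_empty, Real.sInf_empty]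

theorem wdist_union (hw : ∀ e ∈ E, 0 ≤ w e) (hH : H ⊆ TCset E) :
    wdist (E ∪ H) (unionWeight E w H) u v = wdist E w u v := by
  by_cases hr : Reachable E u v
  · exact le_antisymm (wdist_le_wdist_of_subset Set.subset_union_left
      (fun _ he => unionWeight_le hw he) hr)
      (wdist_le_wdist_of_forall_wdist_le hw (fun _ he => ⟨reachable_of_mem_union hH he,
        wdist_le_unionWeight hw he⟩) ((reachable_union_iff hH).2 hr))
  · rw [wdist_eq_zero_of_not_reachable hr,
      wdist_eq_zero_of_not_reachable fun h => hr ((reachable_union_iff hH).1 h)]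

theorem TCset_union (hH : H ⊆ TCset E) : TCset (E ∪ H) = TCset E := by
  ext p
  exact and_congr_right' (reachable_union_iff hH)

theorem unionWeight_antitone (hw : ∀ e ∈ E, 0 ≤ w e) (h : H₁ ⊆ H₂) (he : e ∈ E ∪ H₁) :
    unionWeight E w H₂ e ≤ unionWeight E w H₁ e := by
  by_cases he₂ : e ∈ H₂
  · rw [unionWeight_of_mem he₂]
    exact wdist_le_unionWeight hw he
  · rw [unionWeight_of_notMem he₂, unionWeight_of_notMem fun he₁ => he₂ (h he₁)]

theorem pathWeight_minHopPath_le_wdist (hw : ∀ e ∈ E, 0 ≤ w e) (h : H₁ ⊆ H₂)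
    (hH₁ : H₁ ⊆ TCset E) (hr : Reachable (E ∪ H₁) u v) :
    pathWeight (unionWeight E w H₂) (minHopPath (E ∪ H₁) (unionWeight E w H₁) u v) ≤
      wdist E w u v := by
  have hmin := hr.isMinWeightPath_minHopPath (w := unionWeight E w H₁)
  calc _ ≤ pathWeight (unionWeight E w H₁) (minHopPath (E ∪ H₁) (unionWeight E w H₁) u v) :=
        pathWeight_le_pathWeight fun e he =>
          unionWeight_antitone hw h (hmin.1.isWalkFromTo.mem_of_mem_zip_tail he)
    _ = wdist E w u v := by rw [hmin.pathWeight_eq, wdist_union hw hH₁]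

theorem hopdist_union_antitone (hw : ∀ e ∈ E, 0 ≤ w e) (h : H₁ ⊆ H₂) (hH₂ : H₂ ⊆ TCset E)
    (hr : Reachable E u v) :
    hopdist (E ∪ H₂) (unionWeight E w H₂) u v ≤ hopdist (E ∪ H₁) (unionWeight E w H₁) u v := by
  have hr₁ : Reachable (E ∪ H₁) u v := hr.mono Set.subset_union_left
  have hwalk : IsWalkFromTo (E ∪ H₂) u v (minHopPath (E ∪ H₁) (unionWeight E w H₁) u v) :=
    (hr₁.isMinWeightPath_minHopPath.1.isWalkFromTo).mono (Set.union_subset_union_right E h)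
  have := hwalk.hopdist_succ_le (w := unionWeight E w H₂)
    (fun _ he => unionWeight_nonneg hw he) <|
    (pathWeight_minHopPath_le_wdist hw h (h.trans hH₂) hr₁).trans_eq (wdist_union hw hH₂).symm
  rw [hr₁.length_minHopPath] at this
  omega

theorem isExactHopset_TCset (hw : ∀ e ∈ E, 0 ≤ w e) {β : ℕ} (hβ : 1 ≤ β) :
    IsExactHopset E w (TCset E) β := by
  refine ⟨subset_rfl, fun p hp => ?_⟩
  have hwalk := isWalkFromTo_pair (E := E ∪ TCset E) (Set.mem_union_right E hp)
  have : hopdist (E ∪ TCset E) (unionWeight E w (TCset E)) p.1 p.2 + 1 ≤ 2 :=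
    hwalk.hopdist_succ_le (fun _ he => unionWeight_nonneg hw he) <| by
      rw [pathWeight_pair, wdist_union hw subset_rfl, unionWeight_of_mem hp]
  omega

end Union

section Perturbation

variable {E : Set (Edge n)} {w : Edge n → ℝ} {δ : ℝ} {u v : Fin n} {l : List (Fin n)}

/-- Adding `δ` to every edge weight, with `n * δ < weightGap E w`, keeps strictly heavier paths
strictly heavier and breaks ties between minimum-weight paths in favour of fewer hops. -/
noncomputable def weightGap (E : Set (Edge n)) (w : Edge n → ℝ) : ℝ :=
  sInf (insert 1 {x ∈ Set.image2 (· - ·) (pathWeight w '' {l | IsPathList E l})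
    (pathWeight w '' {l | IsPathList E l}) | 0 < x})

theorem weightGap_set_finite (E : Set (Edge n)) (w : Edge n → ℝ) :
    (insert 1 {x ∈ Set.image2 (· - ·) (pathWeight w '' {l | IsPathList E l})
      (pathWeight w '' {l | IsPathList E l}) | 0 < x}).Finite :=
  (((setOf_isPathList_finite E).image _).image2 _ ((setOf_isPathList_finite E).image _)).sep
    _ |>.insert 1

theorem weightGap_pos (E : Set (Edge n)) (w : Edge n → ℝ) : 0 < weightGap E w := by
  rcases (Set.insert_nonempty _ _).csInf_mem (weightGap_set_finite E w) with h | h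
  · rw [weightGap, h]; exact one_pos
  · exact h.2

theorem wdist_add_weightGap_le (h : IsPathFromTo E u v l) (hlt : wdist E w u v < pathWeight w l) :
    wdist E w u v + weightGap E w ≤ pathWeight w l := by
  obtain ⟨p, hp⟩ := Reachable.exists_isMinWeightPath (w := w) ⟨l, h⟩
  rw [← hp.pathWeight_eq] at hlt ⊢
  have : weightGap E w ≤ pathWeight w l - pathWeight w p :=
    csInf_le (weightGap_set_finite E w).bddBelow <| Set.mem_insert_of_mem _
      ⟨⟨_, ⟨l, h.1, rfl⟩, _, ⟨p, hp.1.1, rfl⟩, rfl⟩, sub_pos.2 hlt⟩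
  linarith

theorem IsWalkFromTo.hopdist_succ_le_of_lt (hw : ∀ e ∈ E, 0 ≤ w e) (h : IsWalkFromTo E u v l)
    (hl : pathWeight w l < wdist E w u v + weightGap E w) : hopdist E w u v + 1 ≤ l.length := by
  obtain ⟨p, hp, hpw, hpl, -⟩ := h.exists_isPathFromTo hw
  have : pathWeight w p ≤ wdist E w u v := not_lt.1 fun hlt => by
    linarith [wdist_add_weightGap_le hp hlt]
  exact (hp.isMinWeightPath this).hopdist_succ_le.trans hpl

theorem IsWalkFromTo.wdist_add_mul_hopdist_le (hw : ∀ e ∈ E, 0 ≤ w e) (hδ : 0 ≤ δ)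
    (hδgap : n * δ < weightGap E w) (h : IsWalkFromTo E u v l) :
    wdist E w u v + δ * hopdist E w u v ≤ pathWeight w l + δ * ((l.length : ℝ) - 1) := by
  have hlen : (1 : ℝ) ≤ l.length := by exact_mod_cast List.length_pos_iff.2 h.ne_nil
  have hhop : (hopdist E w u v : ℝ) ≤ n := by exact_mod_cast (h.reachable.hopdist_lt w).le
  rcases lt_or_ge (pathWeight w l) (wdist E w u v + weightGap E w) with hlt | hge
  · have : (hopdist E w u v : ℝ) + 1 ≤ l.length := by exact_mod_cast h.hopdist_succ_le_of_lt hw hlt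
    nlinarith [h.wdist_le hw]
  · nlinarith

theorem IsWalkFromTo.eq_of_pathWeight_add_mul_le (hw : ∀ e ∈ E, 0 ≤ w e) (hδ : 0 < δ)
    (hδgap : n * δ < weightGap E w) (h : IsWalkFromTo E u v l)
    (hle : pathWeight w l + δ * ((l.length : ℝ) - 1) ≤ wdist E w u v + δ * hopdist E w u v) :
    pathWeight w l = wdist E w u v ∧ l.length = hopdist E w u v + 1 := by
  have hlen : (1 : ℝ) ≤ l.length := by exact_mod_cast List.length_pos_iff.2 h.ne_nil
  have hhop : (hopdist E w u v : ℝ) ≤ n := by exact_mod_cast (h.reachable.hopdist_lt w).le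
  have hwl := h.wdist_le hw
  have : (hopdist E w u v : ℝ) + 1 ≤ l.length := by
    exact_mod_cast h.hopdist_succ_le_of_lt hw (by nlinarith)
  have hhop_eq : (l.length : ℝ) = hopdist E w u v + 1 := by nlinarith
  exact ⟨by nlinarith, by exact_mod_cast hhop_eq⟩

theorem wdist_add_const (hw : ∀ e ∈ E, 0 ≤ w e) (hδ : 0 ≤ δ) (hδgap : n * δ < weightGap E w)
    (hr : Reachable E u v) :
    wdist E (fun e => w e + δ) u v = wdist E w u v + δ * hopdist E w u v := by
  obtain ⟨l₀, hl₀, hlen₀⟩ := hr.exists_minHop E w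
  refine le_antisymm ?_ (le_wdist hr fun l hl => ?_)
  · calc wdist E (fun e => w e + δ) u v ≤ pathWeight (fun e => w e + δ) l₀ := wdist_le hl₀.1
      _ = wdist E w u v + δ * hopdist E w u v := by
        rw [pathWeight_add_const w δ hl₀.1.ne_nil, hl₀.pathWeight_eq, hlen₀]
        push_cast
        ring
  · rw [pathWeight_add_const w δ hl.ne_nil]
    exact hl.isWalkFromTo.wdist_add_mul_hopdist_le hw hδ hδgap

theorem wdist_add_mul_hopdist_le_unionWeight {F : Set (Edge n)} {e : Edge n}
    (hw : ∀ e ∈ E, 0 ≤ w e) (hδ : 0 ≤ δ) (hδgap : n * δ < weightGap E w) (hF : F ⊆ TCset E)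
    (he : e ∈ E ∪ F) :
    wdist E w e.1 e.2 + δ * hopdist E w e.1 e.2 ≤ unionWeight E (fun e => w e + δ) F e := by
  rw [← wdist_add_const hw hδ hδgap (reachable_of_mem_union hF he)]
  exact wdist_le_unionWeight (fun e he => by linarith [hw e he]) he

theorem hopdist_eq_one_of_wdist_add_mul_hopdist_eq {e : Edge n} (hw : ∀ e ∈ E, 0 ≤ w e)
    (hδ : 0 < δ) (hδgap : n * δ < weightGap E w) (he : e ∈ E)
    (h : wdist E w e.1 e.2 + δ * hopdist E w e.1 e.2 = w e + δ) : hopdist E w e.1 e.2 = 1 := by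
  have := (isWalkFromTo_pair he).eq_of_pathWeight_add_mul_le hw hδ hδgap <| by
    rw [pathWeight_pair]
    norm_num
    linarith
  simp only [List.length_cons, List.length_nil] at this
  omega

end Perturbation

section HopsetRoute

variable {E F : Set (Edge n)} {w : Edge n → ℝ} {δ : ℝ} {k : ℕ} {s t : Fin n}

/-- The sums say that expanding every edge of the route `P` into a fewest-hop shortest path
of `G` yields a fewest-hop shortest `s`–`t` path of `G`. -/
theorem exists_path_of_isExactHopset_add_const (hw : ∀ e ∈ E, 0 ≤ w e) (hδ : 0 < δ)
    (hδgap : n * δ < weightGap E w) (hF : IsExactHopset E (fun e => w e + δ) F k)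
    (hst : (s, t) ∈ TCset E) :
    ∃ P, IsPathFromTo (E ∪ F) s t P ∧ (P.zip P.tail).length ≤ k ∧
      pathWeight (fun e => wdist E w e.1 e.2) P = wdist E w s t ∧
      pathWeight (fun e => (hopdist E w e.1 e.2 : ℝ)) P = hopdist E w s t ∧
      ∀ e ∈ P.zip P.tail, e ∉ F → hopdist E w e.1 e.2 = 1 := by
  set ws : Edge n → ℝ := fun e => w e + δ
  have hws : ∀ e ∈ E, 0 ≤ ws e := fun e he => by linarith [hw e he]
  obtain ⟨P, hP, hPlen⟩ := (Reachable.mono Set.subset_union_left hst.2).exists_minHop (E ∪ F)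
    (unionWeight E ws F)
  have hPk : (P.zip P.tail).length ≤ k := by
    have := hF.2 _ hst
    simp only [List.length_zip, List.length_tail]
    omega
  have hPweight : pathWeight (unionWeight E ws F) P = wdist E w s t + δ * hopdist E w s t := by
    rw [hP.pathWeight_eq, wdist_union hws hF.1, wdist_add_const hw hδ.le hδgap hst.2]
  have hdom : ∀ e ∈ P.zip P.tail,
      wdist E w e.1 e.2 + δ * hopdist E w e.1 e.2 ≤ unionWeight E ws F e := fun e he =>
    wdist_add_mul_hopdist_le_unionWeight hw hδ.le hδgap hF.1
      (hP.1.isWalkFromTo.mem_of_mem_zip_tail he)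
  obtain ⟨lw, hlw, hlwW, hlwL⟩ := hP.1.isWalkFromTo.exists_expand_minHop (w := w)
    fun e he => reachable_of_mem_union hF.1 he
  have hsum : pathWeight (fun e => wdist E w e.1 e.2 + δ * hopdist E w e.1 e.2) P =
      pathWeight w lw + δ * ((lw.length : ℝ) - 1) := by
    rw [pathWeight_add, pathWeight_const_mul, hlwW, hlwL]
    ring
  obtain ⟨hW, hL⟩ := hlw.eq_of_pathWeight_add_mul_le hw hδ hδgap <|
    hsum ▸ hPweight ▸ pathWeight_le_pathWeight hdom
  have hL' : pathWeight (fun e => (hopdist E w e.1 e.2 : ℝ)) P = hopdist E w s t := by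
    have : (lw.length : ℝ) = hopdist E w s t + 1 := by exact_mod_cast hL
    linarith
  refine ⟨P, hP.1, hPk, hlwW ▸ hW, hL', fun e he heF => ?_⟩
  have htight := (pathWeight_eq_pathWeight_iff_of_le hP.1.1.1 hdom).1
    (by rw [hsum, hPweight, hW, hL]; push_cast; ring) e he
  rw [unionWeight_of_notMem heF] at htight
  exact hopdist_eq_one_of_wdist_add_mul_hopdist_eq hw hδ hδgap
    ((hP.1.isWalkFromTo.mem_of_mem_zip_tail he).resolve_right heF) htight

end HopsetRoute

section InsertEdge

variable {E H E₂ : Set (Edge n)} {w : Edge n → ℝ} {s t : Fin n} {P : List (Fin n)} {q : Edge n}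

/-- Once `q` is a hopset edge, the `hopdist (q.1, q.2)` hops that the expansion of `P` spends
on `q` shrink to a single hop. -/
theorem hopdist_insert_add_le (hw : ∀ e ∈ E, 0 ≤ w e) (hH : H ⊆ TCset E)
    (hE₂ : ∀ e ∈ E₂, Reachable (E ∪ H) e.1 e.2) (hP : IsPathFromTo E₂ s t P)
    (hPw : pathWeight (fun e => wdist E w e.1 e.2) P = wdist E w s t) (hq : q ∈ P.zip P.tail) :
    (hopdist (E ∪ (H ∪ {q})) (unionWeight E w (H ∪ {q})) s t : ℝ) +
        hopdist (E ∪ H) (unionWeight E w H) q.1 q.2 ≤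
      pathWeight (fun e => (hopdist (E ∪ H) (unionWeight E w H) e.1 e.2 : ℝ)) P + 1 := by
  set w' := unionWeight E w H
  set wq := unionWeight E w (H ∪ {q})
  have hqE₂ : q ∈ E₂ := hP.isWalkFromTo.mem_of_mem_zip_tail hq
  have hqTC : q ∈ TCset E :=
    ⟨hP.1.1.fst_ne_snd_of_mem_zip_tail hq, (reachable_union_iff hH).1 (hE₂ q hqE₂)⟩
  have hHq : H ∪ {q} ⊆ TCset E := Set.union_subset hH (Set.singleton_subset_iff.2 hqTC)
  set σ := Function.update (fun e => minHopPath (E ∪ H) w' e.1 e.2) q [q.1, q.2]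
  have hσq : σ q = [q.1, q.2] := Function.update_self ..
  have hσ : ∀ e, e ≠ q → σ e = minHopPath (E ∪ H) w' e.1 e.2 := fun e he =>
    Function.update_of_ne he ..
  have hσwalk : ∀ e ∈ E₂, IsWalkFromTo (E ∪ (H ∪ {q})) e.1 e.2 (σ e) := fun e he => by
    by_cases heq : e = q
    · subst heq
      exact hσq ▸ isWalkFromTo_pair (Or.inr (Or.inr rfl))
    · exact hσ e heq ▸ (hE₂ e he).isMinWeightPath_minHopPath.1.isWalkFromTo.mono
        (Set.union_subset_union_right E Set.subset_union_left)
  obtain ⟨lw, hlw, hlwW, hlwL⟩ := hP.isWalkFromTo.exists_expand σ hσwalk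
  have hweight : pathWeight wq lw ≤ wdist (E ∪ (H ∪ {q})) wq s t := by
    rw [hlwW, wdist_union hw hHq, ← hPw]
    refine pathWeight_le_pathWeight fun e he => ?_
    by_cases heq : e = q
    · rw [heq, hσq, pathWeight_pair]
      exact (unionWeight_of_mem (E := E) (w := w) (show q ∈ H ∪ {q} from Or.inr rfl)).le
    · rw [hσ e heq]
      exact pathWeight_minHopPath_le_wdist hw Set.subset_union_left hH
        (hE₂ e (hP.isWalkFromTo.mem_of_mem_zip_tail he))
  have hhop : (hopdist (E ∪ (H ∪ {q})) wq s t : ℝ) + 1 ≤ lw.length := by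
    exact_mod_cast hlw.hopdist_succ_le (fun _ he => unionWeight_nonneg hw he) hweight
  have hlen := pathWeight_add_eq_of_forall_ne (f := fun e => ((σ e).length : ℝ) - 1)
    (g := fun e => (hopdist (E ∪ H) w' e.1 e.2 : ℝ)) hP.1.1 hq fun e he heq => by
      rw [hσ e heq, (hE₂ e (hP.isWalkFromTo.mem_of_mem_zip_tail he)).length_minHopPath]
      push_cast
      ring
  simp only [hσq, List.length_cons, List.length_nil] at hlen
  push_cast at hlen
  linarith

end InsertEdge

section Potential

variable {E H H' F : Set (Edge n)} {w : Edge n → ℝ} {β k : ℕ} {δ : ℝ} {p q : Edge n}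

noncomputable def potentialTerm (E : Set (Edge n)) (w : Edge n → ℝ) (H : Set (Edge n)) (β : ℕ)
    (p : Edge n) : ℕ :=
  if TCrel E p.1 p.2 ∧ β ≤ hopdist (E ∪ H) (unionWeight E w H) p.1 p.2
  then hopdist (E ∪ H) (unionWeight E w H) p.1 p.2 else 0

theorem wpotential_eq_sum : wpotential E w H β = ∑ p, potentialTerm E w H β p := rfl

theorem potentialTerm_antitone (hw : ∀ e ∈ E, 0 ≤ w e) (h : H ⊆ H') (hH' : H' ⊆ TCset E)
    (p : Edge n) : potentialTerm E w H' β p ≤ potentialTerm E w H β p := by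
  unfold potentialTerm
  split_ifs with h₁ h₂ h₂
  · exact hopdist_union_antitone hw h hH' h₁.1.2
  · exact absurd ⟨h₁.1, h₁.2.trans (hopdist_union_antitone hw h hH' h₁.1.2)⟩ h₂
  · exact Nat.zero_le _
  · exact le_rfl

theorem wdelta_eq_sum (hw : ∀ e ∈ E, 0 ≤ w e) (hH : H ⊆ TCset E) (hq : q ∈ TCset E) :
    (wdelta E w H β q : ℝ) =
      ∑ p, ((potentialTerm E w H β p : ℝ) - potentialTerm E w (H ∪ {q}) β p) := by
  have hle := potentialTerm_antitone (β := β) hw (Set.subset_union_left (t := {q}))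
    (Set.union_subset hH (Set.singleton_subset_iff.2 hq))
  have hmono : wpotential E w (H ∪ {q}) β ≤ wpotential E w H β :=
    Finset.sum_le_sum fun p _ => hle p
  rw [wdelta, Nat.cast_sub hmono, wpotential_eq_sum, wpotential_eq_sum, Nat.cast_sum, Nat.cast_sum,
    Finset.sum_sub_distrib]

theorem sub_one_le_potentialTerm_sub (hp : TCrel E p.1 p.2)
    (hβ : β ≤ hopdist (E ∪ H) (unionWeight E w H) p.1 p.2) {c : ℝ}
    (hc : (hopdist (E ∪ H') (unionWeight E w H') p.1 p.2 : ℝ) + c ≤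
      hopdist (E ∪ H) (unionWeight E w H) p.1 p.2 + 1) :
    c - 1 ≤ (potentialTerm E w H β p : ℝ) - potentialTerm E w H' β p := by
  unfold potentialTerm
  rw [if_pos ⟨hp, hβ⟩]
  split_ifs
  · linarith
  · push_cast
    linarith [(hopdist (E ∪ H') (unionWeight E w H') p.1 p.2).cast_nonneg (α := ℝ)]

theorem hopdist_sub_le_sum_potentialTerm_sub (hw : ∀ e ∈ E, 0 ≤ w e) (hH : H ⊆ TCset E)
    (hδ : 0 < δ) (hδgap : n * δ < weightGap (E ∪ H) (unionWeight E w H))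
    (hF : IsExactHopset (E ∪ H) (fun e => unionWeight E w H e + δ) F k) (hp : TCrel E p.1 p.2)
    (hβ : β ≤ hopdist (E ∪ H) (unionWeight E w H) p.1 p.2) :
    (hopdist (E ∪ H) (unionWeight E w H) p.1 p.2 : ℝ) - k ≤
      ∑ q ∈ F.toFinset, ((potentialTerm E w H β p : ℝ) - potentialTerm E w (H ∪ {q}) β p) := by
  set Hd : Edge n → ℝ := fun e => (hopdist (E ∪ H) (unionWeight E w H) e.1 e.2 : ℝ)
  have hFE : F ⊆ TCset E := TCset_union hH ▸ hF.1
  have hp' : p ∈ TCset (E ∪ H) := TCset_union hH ▸ hp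
  obtain ⟨P, hP, hPk, hPw, hPh, hPF⟩ := exists_path_of_isExactHopset_add_const (E := E ∪ H)
    (w := unionWeight E w H) (fun _ he => unionWeight_nonneg hw he) hδ hδgap hF hp'
  simp only [wdist_union hw hH] at hPw
  have hE₂ : ∀ e ∈ (E ∪ H) ∪ F, Reachable (E ∪ H) e.1 e.2 := fun e he =>
    he.elim (fun he => (reachable_union_iff hH).2 (reachable_of_mem_union hH he))
      fun he => (hF.1 he).2
  have hdrop : ∀ q ∈ P.zip P.tail,
      Hd q - 1 ≤ (potentialTerm E w H β p : ℝ) - potentialTerm E w (H ∪ {q}) β p := fun q hq =>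
    sub_one_le_potentialTerm_sub hp hβ (hPh ▸ hopdist_insert_add_le hw hH hE₂ hP hPw hq)
  set edges := (P.zip P.tail).toFinset
  calc (Hd p : ℝ) - k ≤ Hd p - (P.zip P.tail).length := by
        have : ((P.zip P.tail).length : ℝ) ≤ k := by exact_mod_cast hPk
        linarith
    _ = ∑ q ∈ edges, (Hd q - 1) := by
        rw [Finset.sum_sub_distrib, ← pathWeight_eq_sum hP.1.1, hPh, Finset.sum_const,
          List.toFinset_card_of_nodup hP.1.1.zip_tail, nsmul_one]
    _ = ∑ q ∈ edges with q ∈ F, (Hd q - 1) := by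
        refine (Finset.sum_filter_of_ne fun q hq hne => ?_).symm
        by_contra hqF
        have hq1 : Hd q = 1 := by
          simp only [Hd]
          exact_mod_cast hPF q (List.mem_toFinset.1 hq) hqF
        exact hne (by rw [hq1, sub_self])
    _ ≤ ∑ q ∈ edges with q ∈ F,
          ((potentialTerm E w H β p : ℝ) - potentialTerm E w (H ∪ {q}) β p) :=
        Finset.sum_le_sum fun q hq => hdrop q (List.mem_toFinset.1 (Finset.mem_filter.1 hq).1)
    _ ≤ ∑ q ∈ F.toFinset, ((potentialTerm E w H β p : ℝ) - potentialTerm E w (H ∪ {q}) β p) := by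
        refine Finset.sum_le_sum_of_subset_of_nonneg (fun q hq => Set.mem_toFinset.2
          (Finset.mem_filter.1 hq).2) fun q hq _ => sub_nonneg.2 ?_
        exact_mod_cast potentialTerm_antitone hw Set.subset_union_left
          (Set.union_subset hH (Set.singleton_subset_iff.2 (hFE (Set.mem_toFinset.1 hq)))) p

theorem wpotential_div_two_le_sum_wdelta (hw : ∀ e ∈ E, 0 ≤ w e) (hH : H ⊆ TCset E)
    (hδ : 0 < δ) (hδgap : n * δ < weightGap (E ∪ H) (unionWeight E w H))
    (hF : IsExactHopset (E ∪ H) (fun e => unionWeight E w H e + δ) F (β / 2)) :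
    (wpotential E w H β : ℝ) / 2 ≤ ∑ q ∈ F.toFinset, (wdelta E w H β q : ℝ) := by
  have hFE : F ⊆ TCset E := TCset_union hH ▸ hF.1
  rw [Finset.sum_congr rfl fun q hq => wdelta_eq_sum hw hH (hFE (Set.mem_toFinset.1 hq)),
    Finset.sum_comm, wpotential_eq_sum, Nat.cast_sum, Finset.sum_div]
  refine Finset.sum_le_sum fun p _ => ?_
  by_cases hbad : TCrel E p.1 p.2 ∧ β ≤ hopdist (E ∪ H) (unionWeight E w H) p.1 p.2
  · have hsum := hopdist_sub_le_sum_potentialTerm_sub hw hH hδ hδgap hF hbad.1 hbad.2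
    have hβ : ((β / 2 : ℕ) : ℝ) ≤ (hopdist (E ∪ H) (unionWeight E w H) p.1 p.2 : ℝ) / 2 := by
      have : (β : ℝ) ≤ hopdist (E ∪ H) (unionWeight E w H) p.1 p.2 := by exact_mod_cast hbad.2
      linarith [Nat.cast_div_le (α := ℝ) (m := β) (n := 2)]
    have hterm : potentialTerm E w H β p = hopdist (E ∪ H) (unionWeight E w H) p.1 p.2 :=
      if_pos hbad
    rw [hterm] at hsum ⊢
    linarith
  · have hterm : potentialTerm E w H β p = 0 := if_neg hbad
    rw [show (potentialTerm E w H β p : ℝ) / 2 = 0 by simp [hterm]]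
    refine Finset.sum_nonneg fun q hq => sub_nonneg.2 ?_
    exact_mod_cast potentialTerm_antitone hw Set.subset_union_left
      (Set.union_subset hH (Set.singleton_subset_iff.2 (hFE (Set.mem_toFinset.1 hq)))) p

end Potential

theorem exists_isExactHopset_ncard_le_exopt {N M β : ℕ} (hβ : 1 ≤ β) {E : Set (Edge n)}
    {w : Edge n → ℝ} (hN : n ≤ N) (hM : E.ncard ≤ M) (hw : ∀ e ∈ E, 0 < w e) :
    ∃ H, H.ncard ≤ exopt N M β ∧ IsExactHopset E w H β := by
  have : exopt N M β ∈ {h : ℕ | ∀ n' : ℕ, n' ≤ N → ∀ (E : Set (Edge n')) (w : Edge n' → ℝ),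
      E.ncard ≤ M → (∀ e ∈ E, 0 < w e) →
      ∃ H : Set (Edge n'), H.ncard ≤ h ∧ IsExactHopset E w H β} :=
    Nat.sInf_mem ⟨N * N, fun n' hn' E w _ hw => ⟨TCset E, ?_,
      isExactHopset_TCset (fun e he => (hw e he).le) hβ⟩⟩
  · exact this n hN E w hM hw
  · calc (TCset E).ncard ≤ Nat.card (Edge n') := Set.ncard_le_card _
      _ = n' * n' := by simp
      _ ≤ N * N := Nat.mul_le_mul hn' hn'

theorem exists_div_le_of_le_sum {ι : Type*} {s : Finset ι} {f : ι → ℝ} {a x : ℝ} (ha : 0 < a)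
    (hcard : (s.card : ℝ) ≤ x) (h : a ≤ ∑ i ∈ s, f i) : ∃ i ∈ s, a / x ≤ f i := by
  have hs : s.Nonempty := Finset.nonempty_iff_ne_empty.2 fun hs => by
    simp only [hs, Finset.sum_empty] at h
    linarith
  have hx : 0 < x := lt_of_lt_of_le (by exact_mod_cast hs.card_pos) hcard
  refine Finset.exists_le_of_sum_le hs ?_
  calc ∑ _ ∈ s, a / x = s.card * (a / x) := by rw [Finset.sum_const, nsmul_eq_mul]
    _ ≤ x * (a / x) := by gcongr
    _ = a := by field_simp
    _ ≤ ∑ i ∈ s, f i := h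

/-- **Potential Reduction Lemma for hopsets.** Let `G` be a weighted
directed graph with `n` vertices, `m` edges and positive real edge weights, `β ≥ 2` an
integer, and `H ⊆ TC(G)` a set of hopset edges with `φ(H) > 0`. Then some
`(u,v) ∈ TC(G)` satisfies `Δ((u,v) | H) ≥ φ(H) / (2 · exopt(n, m + |H|, ⌊β/2⌋))`. -/
theorem potential_reduction_hopset :
    ∀ (n : ℕ) (E : Set (Edge n)) (w : Edge n → ℝ), (∀ e ∈ E, 0 < w e) →
      ∀ β : ℕ, 2 ≤ β →
        ∀ H : Set (Edge n), H ⊆ TCset E → 0 < wpotential E w H β →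
          ∃ e ∈ TCset E,
            (wdelta E w H β e : ℝ) ≥
              (wpotential E w H β : ℝ) /
                (2 * (exopt n (E.ncard + H.ncard) (β / 2) : ℝ)) := by
  intro n E w hw β hβ H hH hφ
  have hw₀ : ∀ e ∈ E, 0 ≤ w e := fun e he => (hw e he).le
  obtain ⟨δ, hδ, hδgap⟩ := exists_pos_mul_lt (weightGap_pos (E ∪ H) (unionWeight E w H)) n
  obtain ⟨F, hFcard, hF⟩ := exists_isExactHopset_ncard_le_exopt (β := β / 2)
    (E := E ∪ H) (w := fun e => unionWeight E w H e + δ) (by omega) le_rfl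
    (Set.ncard_union_le E H) fun e he => by linarith [unionWeight_nonneg hw₀ he]
  obtain ⟨q, hqF, hq⟩ := exists_div_le_of_le_sum (x := exopt n (E.ncard + H.ncard) (β / 2))
    (by positivity) (by rw [← Set.ncard_eq_toFinset_card']; exact_mod_cast hFcard)
    (wpotential_div_two_le_sum_wdelta hw₀ hH hδ hδgap hF)
  refine ⟨q, TCset_union hH ▸ hF.1 (Set.mem_toFinset.1 hqF), ?_⟩
  rwa [div_div] at hq
end

section
/- There is an absolute constant C > 0 with the following property. For every DAG G on n ≥ 2 vertices and every set 𝒞 of pairwise vertex-disjoint chains of G, there exists a set H ⊆ TC(G) with |H| ≤ C · n · (1 + log* n) such that for every chain C ∈ 𝒞 and all vertices u, v ∈ C with u occurring before v on C, dist_{G∪H}(u, v) ≤ 4. -/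
/-!
Index the vertices of a chain by their positions `0, …, m - 1`. It suffices to find `O(m log* m)`
pairs `i < j` of positions such that any two positions `i < j` are joined by at most four hops
along these pairs: every such pair is a pair of the transitive closure, and in a DAG (to which
transitive-closure edges may be added) every walk is a path, so hops bound `dist`.

Cut `[0, m)` into blocks of length `b = ⌈log₂ m⌉`. Positions in different blocks are joined by
one hop up to the next block leader, two hops among the `m / b` leaders through the dyadic two-hop
scheme (`(m / b) log m = O(m)` pairs), and one hop down from the leader of the target's block.
Positions in the same block are handled recursively. Since `log* ⌈log₂ m⌉ < log* m`, each of the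
`log* m` recursion levels costs `O(m)` pairs, and summing over disjoint chains gives
`O(n log* n)`.
-/

open scoped Classical

/-- `hdist E u v` is the minimum number of edges on a directed path from `u` to `v`
(`⊤` if no such path exists). -/
noncomputable def hdist {n : ℕ} (E : Set (Edge n)) (u v : Fin n) : ℕ∞ :=
  sInf {k : ℕ∞ | ∃ l : List (Fin n), IsPathFromTo E u v l ∧ (l.length : ℕ∞) = k + 1}

/-- `H` is a shortcut set with hopbound `β` for the graph with edge set `E`. -/
def IsShortcutSet {n : ℕ} (E H : Set (Edge n)) (β : ℕ) : Prop :=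
  H ⊆ TCset E ∧ ∀ p ∈ TCset E, hdist (E ∪ H) p.1 p.2 ≤ (β : ℕ∞)

/-- Reachability in the graph with edge set `E`. -/
def Reaches {n : ℕ} (E : Set (Edge n)) (u v : Fin n) : Prop :=
  Relation.ReflTransGen (fun a b => (a, b) ∈ E) u v

/-- A DAG: a directed graph with no directed cycles. -/
def IsDAG {n : ℕ} (E : Set (Edge n)) : Prop :=
  ∀ u v : Fin n, (u, v) ∈ E → ¬ Reaches E v u

/-- The iterated base-2 logarithm `log* x`: the least `k ≥ 0` such that applying
`log₂` to `x` a total of `k` times yields a value at most `1`. -/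
noncomputable def logStar (x : ℝ) : ℕ :=
  sInf {k : ℕ | (fun y => Real.logb 2 y)^[k] x ≤ 1}

/-- A chain: a sequence of distinct vertices each consecutive pair of which
lies in the transitive closure. -/
def IsChainIn {n : ℕ} (E : Set (Edge n)) (C : List (Fin n)) : Prop :=
  C.Nodup ∧ C.Chain' (fun a b => TCrel E a b)


open Finset

def tower : ℕ → ℕ
  | 0 => 1
  | j + 1 => 2 ^ tower j

lemma tower_strictMono : StrictMono tower :=
  strictMono_nat_of_lt_succ fun _ => Nat.lt_two_pow_self

lemma lt_tower (j : ℕ) : j < tower j := by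
  induction j with
  | zero => simp [tower]
  | succ j ih => exact lt_of_le_of_lt ih (tower_strictMono j.lt_succ_self)

lemma logb_two_le_tower_iff {x : ℝ} (hx : 0 < x) (j : ℕ) :
    Real.logb 2 x ≤ tower j ↔ x ≤ tower (j + 1) := by
  rw [Real.logb_le_iff_le_rpow one_lt_two hx, Real.rpow_natCast, tower]
  push_cast
  rfl

lemma exists_iterate_logb_le_one {x : ℝ} {j : ℕ} (hx : x ≤ tower j) :
    ∃ k ≤ j, (fun y => Real.logb 2 y)^[k] x ≤ 1 := by
  induction j generalizing x with
  | zero => exact ⟨0, le_rfl, by simpa [tower] using hx⟩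
  | succ j ih =>
    rcases le_or_gt x 1 with hx1 | hx1
    · exact ⟨0, by omega, hx1⟩
    obtain ⟨k, hkj, hk⟩ := ih ((logb_two_le_tower_iff (by linarith) j).2 hx)
    exact ⟨k + 1, by omega, by rwa [Function.iterate_succ_apply]⟩

lemma le_tower_of_iterate_logb {x : ℝ} {k : ℕ} (hk : (fun y => Real.logb 2 y)^[k] x ≤ 1)
    (hlt : ∀ i < k, 1 < (fun y => Real.logb 2 y)^[i] x) : x ≤ tower k := by
  induction k generalizing x with
  | zero => simpa [tower] using hk
  | succ k ih =>
    have hx : 1 < x := hlt 0 k.succ_pos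
    refine (logb_two_le_tower_iff (by linarith) k).1 (ih hk fun i hi => ?_)
    simpa only [Function.iterate_succ_apply] using hlt (i + 1) (by omega)

theorem logStar_le_iff {x : ℝ} {j : ℕ} : logStar x ≤ j ↔ x ≤ tower j := by
  have hne : {k | (fun y => Real.logb 2 y)^[k] x ≤ 1}.Nonempty := by
    have hx : x ≤ tower ⌈x⌉₊ := (Nat.le_ceil x).trans (by exact_mod_cast (lt_tower _).le)
    obtain ⟨k, -, hk⟩ := exists_iterate_logb_le_one hx
    exact ⟨k, hk⟩
  constructor
  · intro h
    refine (le_tower_of_iterate_logb (Nat.sInf_mem hne) fun i hi => ?_).trans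
      (by exact_mod_cast tower_strictMono.monotone h)
    exact lt_of_not_ge (Nat.notMem_of_lt_sInf hi)
  · intro h
    obtain ⟨k, hkj, hk⟩ := exists_iterate_logb_le_one h
    exact (Nat.sInf_le hk).trans hkj

lemma logStar_mono : Monotone logStar := fun _ _ hxy =>
  logStar_le_iff.2 (hxy.trans (logStar_le_iff.1 le_rfl))

lemma logStar_clog_lt {m : ℕ} (hm : 2 ≤ m) : logStar (Nat.clog 2 m) < logStar m := by
  obtain ⟨j, hj⟩ : ∃ j, logStar m = j + 1 := by
    refine Nat.exists_eq_succ_of_ne_zero fun h => ?_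
    have : (m : ℝ) ≤ 1 := by simpa [tower] using logStar_le_iff.1 h.le
    norm_cast at this
    omega
  have hm' : m ≤ 2 ^ tower j := by exact_mod_cast logStar_le_iff.1 hj.le
  have : logStar (Nat.clog 2 m) ≤ j :=
    logStar_le_iff.2 (by exact_mod_cast Nat.clog_le_of_le_pow hm')
  omega

inductive ReachWithin {α : Type*} (E : Set (α × α)) : ℕ → α → α → Prop
  | refl (k : ℕ) (a : α) : ReachWithin E k a a
  | head {k : ℕ} {a b c : α} : (a, b) ∈ E → ReachWithin E k b c → ReachWithin E (k + 1) a c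

namespace ReachWithin

variable {α β : Type*} {E F : Set (α × α)} {k l : ℕ} {a b c : α}

lemma single (h : (a, b) ∈ E) : ReachWithin E 1 a b := head h (refl 0 b)

lemma of_eq_or_mem (h : a = b ∨ (a, b) ∈ E) : ReachWithin E 1 a b := by
  rcases h with rfl | h
  exacts [refl 1 a, single h]

lemma mono_steps (h : ReachWithin E k a b) (hkl : k ≤ l) : ReachWithin E l a b := by
  induction h generalizing l with
  | refl k a => exact refl l a
  | head hab _ ih =>
    obtain ⟨l, rfl⟩ : ∃ l', l = l' + 1 := ⟨l - 1, by omega⟩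
    exact head hab (ih (by omega))

lemma trans (hab : ReachWithin E k a b) (hbc : ReachWithin E l b c) :
    ReachWithin E (k + l) a c := by
  induction hab with
  | refl k a => exact hbc.mono_steps (Nat.le_add_left l k)
  | head hab _ ih => simpa only [Nat.add_right_comm] using head hab (ih hbc)

lemma map {F : Set (β × β)} (f : α → β) (hf : ∀ a b, (a, b) ∈ E → (f a, f b) ∈ F)
    (h : ReachWithin E k a b) : ReachWithin F k (f a) (f b) := by
  induction h with
  | refl k a => exact refl k (f a)
  | head hab _ ih => exact head (hf _ _ hab) ih

lemma mono (hEF : E ⊆ F) (h : ReachWithin E k a b) : ReachWithin F k a b :=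
  h.map id fun _ _ hab => hEF hab

lemma exists_isChain (h : ReachWithin E k a b) :
    ∃ l : List α, l.IsChain (fun x y => (x, y) ∈ E) ∧
      l.head? = some a ∧ l.getLast? = some b ∧ l.length ≤ k + 1 := by
  induction h with
  | refl k a => exact ⟨[a], .singleton a, rfl, rfl, by simp⟩
  | @head k a b c hab _ ih =>
    obtain ⟨l, hl, hhead, hlast, hlen⟩ := ih
    obtain ⟨t, rfl⟩ : ∃ t, l = b :: t := by
      cases l with
      | nil => simp at hhead
      | cons x t => exact ⟨t, by simpa using hhead⟩
    exact ⟨a :: b :: t, hl.cons_cons hab, rfl, by rwa [List.getLast?_cons_cons],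
      by simpa using hlen⟩

end ReachWithin

section Graph

variable {n : ℕ} {E H : Set (Edge n)} {u v : Fin n}

lemma IsDAG.nodup_of_isChain (hD : IsDAG E) {l : List (Fin n)}
    (hl : l.IsChain fun a b => (a, b) ∈ E) : l.Nodup := by
  have hpw : l.Pairwise (Relation.TransGen fun a b => (a, b) ∈ E) :=
    (hl.imp fun _ _ => Relation.TransGen.single).pairwise
  refine List.nodup_iff_pairwise_ne.2 (hpw.imp ?_)
  rintro a _ haa rfl
  obtain ⟨b, hab, hba⟩ := Relation.TransGen.head'_iff.1 haa
  exact hD a b hab hba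

lemma IsDAG.hdist_le_of_reachWithin (hD : IsDAG E) {k : ℕ}
    (h : ReachWithin E k u v) : hdist E u v ≤ k := by
  obtain ⟨l, hl, hhead, hlast, hlen⟩ := h.exists_isChain
  have hne : l ≠ [] := by rintro rfl; simp at hhead
  have hpos := List.length_pos_of_ne_nil hne
  have hmem : ((l.length - 1 : ℕ) : ℕ∞) ∈
      {k : ℕ∞ | ∃ l : List (Fin n), IsPathFromTo E u v l ∧ (l.length : ℕ∞) = k + 1} :=
    ⟨l, ⟨⟨hD.nodup_of_isChain hl, hl⟩, hhead, hlast⟩, by norm_cast; omega⟩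
  exact (sInf_le hmem).trans (by exact_mod_cast (by omega : l.length - 1 ≤ k))

lemma reaches_of_isPathFromTo {l : List (Fin n)} (h : IsPathFromTo E u v l) :
    Reaches E u v := by
  obtain ⟨⟨-, hl⟩, hhead, hlast⟩ := h
  cases l with
  | nil => simp at hhead
  | cons a t =>
    obtain rfl : a = u := by simpa using hhead
    refine List.relationReflTransGen_of_exists_isChain_cons t hl ?_
    simpa [List.getLast?_eq_some_getLast] using hlast

lemma IsDAG.tcrel_iff (hD : IsDAG E) : TCrel E u v ↔ u ≠ v ∧ Reaches E u v := by
  refine ⟨fun ⟨huv, l, hl⟩ => ⟨huv, reaches_of_isPathFromTo hl⟩, fun ⟨huv, hr⟩ => ⟨huv, ?_⟩⟩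
  obtain ⟨l, hl, hlast⟩ := List.exists_isChain_cons_of_relationReflTransGen hr
  exact ⟨u :: l, ⟨hD.nodup_of_isChain hl, hl⟩, rfl,
    by simp [List.getLast?_eq_some_getLast, hlast]⟩

lemma IsDAG.union_of_subset_TCset (hD : IsDAG E) (hH : H ⊆ TCset E) : IsDAG (E ∪ H) := by
  have hreach : ∀ {x y}, Reaches (E ∪ H) x y → Reaches E x y := by
    intro x y hxy
    induction hxy with
    | refl => exact .refl
    | tail _ hbc ih =>
      rcases hbc with hbc | hbc
      exacts [ih.tail hbc, ih.trans ((hD.tcrel_iff).1 (hH hbc)).2]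
  rintro a b (hab | hab) hba
  · exact hD a b hab (hreach hba)
  · obtain ⟨hne, hr⟩ := (hD.tcrel_iff).1 (hH hab)
    rcases hr.cases_head with h | ⟨c, hac, hcb⟩
    exacts [hne h, hD a c hac (hcb.trans (hreach hba))]

lemma IsChainIn.tcrel_getElem (hD : IsDAG E) {Ch : List (Fin n)} (hCh : IsChainIn E Ch)
    {i j : ℕ} (hij : i < j) (hj : j < Ch.length) : TCrel E Ch[i] Ch[j] := by
  refine (hD.tcrel_iff).2 ⟨fun h => hij.ne ((hCh.1.getElem_inj_iff).1 h), ?_⟩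
  have hpw : Ch.Pairwise (Relation.ReflTransGen fun a b => (a, b) ∈ E) :=
    (hCh.2.imp (S := Relation.ReflTransGen fun a b => (a, b) ∈ E)
      fun _ _ h => ((hD.tcrel_iff).1 h).2).pairwise
  exact List.pairwise_iff_getElem.1 hpw i j _ hj hij

end Graph

section Schemes

variable {b d m i j : ℕ}

def ladder (d m : ℕ) : Finset (ℕ × ℕ) :=
  ((range m).image (fun i => (i, (i / d + 1) * d)) ∪
      (range m).image (fun j => (j / d * d, j))).filter fun p => p.1 < p.2 ∧ p.2 < m

lemma lt_of_mem_ladder {p : ℕ × ℕ} (hp : p ∈ ladder d m) : p.1 < p.2 ∧ p.2 < m :=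
  (mem_filter.1 hp).2

lemma card_ladder_le : #(ladder d m) ≤ 2 * m := by
  refine (card_filter_le _ _).trans ((card_union_le _ _).trans ?_)
  have h₁ := (card_image_le (s := range m) (f := fun i => (i, (i / d + 1) * d))).trans
    (card_range m).le
  have h₂ := (card_image_le (s := range m) (f := fun j => (j / d * d, j))).trans
    (card_range m).le
  omega

lemma mem_ladder_up (hd : 0 < d) (h : (i / d + 1) * d < m) :
    (i, (i / d + 1) * d) ∈ ladder d m := by
  have hi : i < (i / d + 1) * d := by simpa [mul_comm] using Nat.lt_mul_div_succ i hd
  exact mem_filter.2 ⟨mem_union_left _ (mem_image_of_mem _ (mem_range.2 (by omega))), hi, h⟩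

lemma reachWithin_ladder_down (hj : j < m) : ReachWithin (ladder d m) 1 (j / d * d) j := by
  refine .of_eq_or_mem ((Nat.div_mul_le_self j d).eq_or_lt.imp id fun h => ?_)
  exact mem_filter.2 ⟨mem_union_right _ (mem_image_of_mem _ (mem_range.2 hj)), h, hj⟩

def twoHop (m : ℕ) : Finset (ℕ × ℕ) :=
  (range (Nat.log 2 m + 1)).biUnion fun t => ladder (2 ^ t) m

lemma lt_of_mem_twoHop {p : ℕ × ℕ} (hp : p ∈ twoHop m) : p.1 < p.2 ∧ p.2 < m := by
  obtain ⟨t, -, hp⟩ := mem_biUnion.1 hp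
  exact lt_of_mem_ladder hp

lemma card_twoHop_le : #(twoHop m) ≤ (Nat.log 2 m + 1) * (2 * m) := by
  refine card_biUnion_le.trans ((sum_le_sum fun t _ => card_ladder_le).trans ?_)
  simp

lemma exists_div_two_pow_eq_succ (hij : i < j) : ∃ t, j / 2 ^ t = i / 2 ^ t + 1 := by
  induction j using Nat.strong_induction_on generalizing i with
  | _ j ih =>
    rcases (Nat.succ_le_of_lt hij).eq_or_lt with h | h
    · exact ⟨0, by rw [pow_zero, Nat.div_one, Nat.div_one]; omega⟩
    obtain ⟨t, ht⟩ := ih (j / 2) (by omega) (i := i / 2) (by omega)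
    exact ⟨t + 1, by simpa [Nat.div_div_eq_div_mul, pow_succ'] using ht⟩

lemma reachWithin_twoHop (hij : i ≤ j) (hj : j < m) : ReachWithin (twoHop m) 2 i j := by
  rcases hij.eq_or_lt with rfl | hij
  · exact .refl 2 i
  obtain ⟨t, ht⟩ := exists_div_two_pow_eq_succ hij
  have htm : t ≤ Nat.log 2 m := by
    refine Nat.le_log_of_pow_le one_lt_two ?_
    have := Nat.div_pos_iff.1 (ht ▸ Nat.succ_pos _ : 0 < j / 2 ^ t)
    omega
  have hup : (i, j / 2 ^ t * 2 ^ t) ∈ ladder (2 ^ t) m := by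
    rw [ht]
    exact mem_ladder_up (by positivity)
      (by rw [← ht]; exact (Nat.div_mul_le_self _ _).trans_lt hj)
  refine ((ReachWithin.single hup).trans (reachWithin_ladder_down hj)).mono ?_
  exact subset_biUnion_of_mem (fun t => ladder (2 ^ t) m) (mem_range.2 (by omega))

def crossBlockEdges (b m : ℕ) : Finset (ℕ × ℕ) :=
  ladder b m ∪ (twoHop ((m - 1) / b + 1)).image fun p => (p.1 * b, p.2 * b)

lemma lt_of_mem_crossBlockEdges (hb : 0 < b) {p : ℕ × ℕ} (hp : p ∈ crossBlockEdges b m) :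
    p.1 < p.2 ∧ p.2 < m := by
  rcases mem_union.1 hp with hp | hp
  · exact lt_of_mem_ladder hp
  obtain ⟨q, hq, rfl⟩ := mem_image.1 hp
  obtain ⟨h₁, h₂⟩ := lt_of_mem_twoHop hq
  have : q.2 * b ≤ (m - 1) / b * b := Nat.mul_le_mul_right b (by omega)
  have := Nat.div_mul_le_self (m - 1) b
  have := Nat.le_mul_of_pos_left b (show 0 < q.2 by omega)
  exact ⟨Nat.mul_lt_mul_of_pos_right h₁ hb, by omega⟩

lemma card_crossBlockEdges_le (hb : 0 < b) (hbm : b ≤ m) (hlog : Nat.log 2 m ≤ b) :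
    #(crossBlockEdges b m) ≤ 8 * m := by
  unfold crossBlockEdges
  set M := (m - 1) / b + 1
  have hMb : M * b ≤ m - 1 + b := by
    simpa [M, add_mul] using Nat.div_mul_le_self (m - 1) b
  have hMm : M ≤ m := by
    have := Nat.div_le_self (m - 1) b
    omega
  have hleaders : #((twoHop M).image fun p => (p.1 * b, p.2 * b)) ≤ 6 * m := by
    refine card_image_le.trans (card_twoHop_le.trans ?_)
    have hlogM : Nat.log 2 M ≤ b := (Nat.log_mono_right hMm).trans hlog
    calc (Nat.log 2 M + 1) * (2 * M) ≤ (b + 1) * (2 * M) := by gcongr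
      _ = 2 * (M * b) + 2 * M := by ring
      _ ≤ 6 * m := by omega
  have := (card_union_le (ladder b m) _).trans (add_le_add card_ladder_le hleaders)
  omega

lemma reachWithin_crossBlockEdges (hb : 0 < b) (hij : i / b < j / b) (hj : j < m) :
    ReachWithin (crossBlockEdges b m) 4 i j := by
  have hle : (i / b + 1) * b ≤ j / b * b := Nat.mul_le_mul_right b hij
  have hup := ReachWithin.single (E := (ladder b m : Set (ℕ × ℕ))) (mem_ladder_up hb
    (hle.trans_lt ((Nat.div_mul_le_self j b).trans_lt hj)))
  have hleaders := (reachWithin_twoHop (m := (m - 1) / b + 1) hij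
    (Nat.lt_succ_of_le (Nat.div_le_div_right (by omega)))).map (· * b)
    fun p q h => mem_image_of_mem (fun p => (p.1 * b, p.2 * b)) h
  exact ((hup.mono subset_union_left).trans (hleaders.mono subset_union_right)).trans
    ((reachWithin_ladder_down hj).mono subset_union_left)

end Schemes

lemma clog_two_lt_self {m : ℕ} (hm : 0 < m) : Nat.clog 2 m < m := by
  have : m ≤ 2 ^ (m - 1) := by
    have := Nat.lt_two_pow_self (n := m - 1)
    omega
  have := Nat.clog_le_of_le_pow this
  omega

def fourHop (m : ℕ) : Finset (ℕ × ℕ) :=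
  if m < 2 then ∅ else
    crossBlockEdges (Nat.clog 2 m) m ∪
      (range ((m - 1) / Nat.clog 2 m + 1)).biUnion fun k =>
        (fourHop (min (Nat.clog 2 m) (m - k * Nat.clog 2 m))).image
          fun p => (p.1 + k * Nat.clog 2 m, p.2 + k * Nat.clog 2 m)
termination_by m
decreasing_by exact (min_le_left _ _).trans_lt (clog_two_lt_self (by omega))

section FourHop

variable {m : ℕ}

lemma fourHop_of_two_le (hm : 2 ≤ m) : fourHop m =
    crossBlockEdges (Nat.clog 2 m) m ∪
      (range ((m - 1) / Nat.clog 2 m + 1)).biUnion fun k =>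
        (fourHop (min (Nat.clog 2 m) (m - k * Nat.clog 2 m))).image
          fun p => (p.1 + k * Nat.clog 2 m, p.2 + k * Nat.clog 2 m) := by
  rw [fourHop, if_neg (by omega)]

lemma lt_of_mem_fourHop {p : ℕ × ℕ} (hp : p ∈ fourHop m) : p.1 < p.2 ∧ p.2 < m := by
  induction m using Nat.strong_induction_on generalizing p with
  | _ m ih =>
    rcases lt_or_ge m 2 with hm | hm
    · simp [fourHop, hm] at hp
    rw [fourHop_of_two_le hm] at hp
    have hb : 0 < Nat.clog 2 m := Nat.clog_pos one_lt_two hm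
    rcases mem_union.1 hp with hp | hp
    · exact lt_of_mem_crossBlockEdges hb hp
    obtain ⟨k, -, q, hq, rfl⟩ := by simpa only [mem_biUnion, mem_image] using hp
    have := ih _ ((min_le_left _ _).trans_lt (clog_two_lt_self (by omega))) hq
    have := min_le_right (Nat.clog 2 m) (m - k * Nat.clog 2 m)
    exact ⟨by omega, by omega⟩

lemma sum_min_sub_mul_le (b m : ℕ) :
    ∀ M, ∑ k ∈ range M, min b (m - k * b) ≤ min (M * b) m
  | 0 => by simp
  | M + 1 => by
    rw [sum_range_succ, add_mul, one_mul]
    have := sum_min_sub_mul_le b m M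
    omega

theorem card_fourHop_le (m : ℕ) : #(fourHop m) ≤ 8 * m * (1 + logStar m) := by
  induction m using Nat.strong_induction_on with
  | _ m ih =>
    rcases lt_or_ge m 2 with hm | hm
    · simp [fourHop, hm]
    rw [fourHop_of_two_le hm]
    set b := Nat.clog 2 m
    have hbm : b < m := clog_two_lt_self (by omega)
    have hcross := card_crossBlockEdges_le (Nat.clog_pos one_lt_two hm) hbm.le
      (Nat.log_le_clog 2 m)
    have hlog : 1 + logStar b ≤ logStar m := by rw [add_comm]; exact logStar_clog_lt hm
    have hblock : ∀ k ∈ range ((m - 1) / b + 1),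
        #((fourHop (min b (m - k * b))).image fun p => (p.1 + k * b, p.2 + k * b)) ≤
          8 * logStar m * min b (m - k * b) := fun k _ => by
      refine card_image_le.trans ((ih _ ((min_le_left _ _).trans_lt hbm)).trans ?_)
      have : logStar (min b (m - k * b) : ℕ) ≤ logStar b :=
        logStar_mono (by exact_mod_cast min_le_left _ _)
      calc 8 * min b (m - k * b) * (1 + logStar (min b (m - k * b) : ℕ))
          ≤ 8 * min b (m - k * b) * logStar m := by gcongr; omega
        _ = 8 * logStar m * min b (m - k * b) := by ring
    have hblocks := card_biUnion_le.trans ((sum_le_sum hblock).trans_eq (mul_sum _ _ _).symm)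
    have hsum := (sum_min_sub_mul_le b m ((m - 1) / b + 1)).trans (min_le_right _ _)
    calc _ ≤ 8 * m + 8 * logStar m * m :=
          (card_union_le _ _).trans (add_le_add hcross (hblocks.trans (by gcongr)))
      _ = 8 * m * (1 + logStar m) := by ring

theorem reachWithin_fourHop {i j : ℕ} (hij : i < j) (hj : j < m) :
    ReachWithin (fourHop m) 4 i j := by
  induction m using Nat.strong_induction_on generalizing i j with
  | _ m ih =>
    have hm : 2 ≤ m := by omega
    rw [fourHop_of_two_le hm]
    set b := Nat.clog 2 m
    have hb : 0 < b := Nat.clog_pos one_lt_two hm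
    rcases (Nat.div_le_div_right hij.le : i / b ≤ j / b).lt_or_eq with hdiv | hdiv
    · exact (reachWithin_crossBlockEdges hb hdiv hj).mono subset_union_left
    set k := i / b
    have hki : k * b ≤ i := Nat.div_mul_le_self i b
    have hjk : j < k * b + b := hdiv ▸ Nat.lt_div_mul_add hb
    have hblock := (ih (min b (m - k * b))
      ((min_le_left _ _).trans_lt (clog_two_lt_self (by omega)))
      (i := i - k * b) (j := j - k * b) (by omega) (by omega)).map (· + k * b)
      fun p q h => mem_image_of_mem (fun p => (p.1 + k * b, p.2 + k * b)) h
    rw [Nat.sub_add_cancel hki, Nat.sub_add_cancel (by omega)] at hblock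
    refine hblock.mono (coe_subset.2 (subset_union_right.trans' ?_))
    have hk : k ∈ range ((m - 1) / b + 1) :=
      mem_range.2 (Nat.lt_succ_of_le (Nat.div_le_div_right (by omega)))
    exact subset_biUnion_of_mem (fun k => (fourHop (min b (m - k * b))).image
      fun p => (p.1 + k * b, p.2 + k * b)) hk

end FourHop

section Chains

variable {α : Type*} [DecidableEq α]

-- `d` is never read: all index pairs of `fourHop Ch.length` lie in range.
def shortcutsAlong (Ch : List α) (d : α) : Finset (α × α) :=
  (fourHop Ch.length).image fun p => (Ch.getD p.1 d, Ch.getD p.2 d)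

lemma card_shortcutsAlong_le {Ch : List α} {N : ℕ} (hN : Ch.length ≤ N) (d : α) :
    #(shortcutsAlong Ch d) ≤ 8 * (1 + logStar N) * Ch.length := by
  refine card_image_le.trans ((card_fourHop_le _).trans ?_)
  have : logStar Ch.length ≤ logStar N := logStar_mono (by exact_mod_cast hN)
  calc 8 * Ch.length * (1 + logStar Ch.length) ≤ 8 * Ch.length * (1 + logStar N) := by gcongr
    _ = 8 * (1 + logStar N) * Ch.length := by ring

lemma reachWithin_shortcutsAlong {Ch : List α} (d : α) {i j : ℕ} (hij : i < j)
    (hj : j < Ch.length) : ReachWithin (shortcutsAlong Ch d) 4 Ch[i] Ch[j] := by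
  have := (reachWithin_fourHop hij hj).map (Ch.getD · d)
    fun p q h => mem_image_of_mem (fun p => (Ch.getD p.1 d, Ch.getD p.2 d)) h
  rwa [List.getD_eq_getElem _ _ (hij.trans hj), List.getD_eq_getElem _ _ hj] at this

lemma shortcutsAlong_subset_TCset {n : ℕ} {E : Set (Edge n)} (hD : IsDAG E)
    {Ch : List (Fin n)} (hCh : IsChainIn E Ch) (d : Fin n) :
    ↑(shortcutsAlong Ch d) ⊆ TCset E := by
  intro e he
  obtain ⟨p, hp, rfl⟩ := mem_image.1 (mem_coe.1 he)
  obtain ⟨h₁₂, h₂⟩ := lt_of_mem_fourHop hp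
  show TCrel E (Ch.getD p.1 d) (Ch.getD p.2 d)
  rw [List.getD_eq_getElem _ _ (h₁₂.trans h₂), List.getD_eq_getElem _ _ h₂]
  exact hCh.tcrel_getElem hD h₁₂ h₂

lemma sum_length_le_card_of_pairwise_disjoint [Fintype α] {s : Finset (List α)}
    (hnd : ∀ l ∈ s, l.Nodup) (hdisj : (s : Set (List α)).Pairwise List.Disjoint) :
    ∑ l ∈ s, l.length ≤ Fintype.card α := by
  calc ∑ l ∈ s, l.length = ∑ l ∈ s, #l.toFinset :=
        sum_congr rfl fun l hl => (List.toFinset_card_of_nodup (hnd l hl)).symm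
    _ = #(s.biUnion List.toFinset) :=
        (card_biUnion fun l hl l' hl' h =>
          List.disjoint_toFinset_iff_disjoint.2 (hdisj hl hl' h)).symm
    _ ≤ Fintype.card α := card_le_univ _

lemma card_biUnion_shortcutsAlong_le [Fintype α] {s : Finset (List α)}
    (hnd : ∀ l ∈ s, l.Nodup) (hdisj : (s : Set (List α)).Pairwise List.Disjoint) (d : α) :
    #(s.biUnion fun Ch => shortcutsAlong Ch d) ≤
      8 * Fintype.card α * (1 + logStar (Fintype.card α)) := by
  calc #(s.biUnion fun Ch => shortcutsAlong Ch d)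
      ≤ ∑ Ch ∈ s, 8 * (1 + logStar (Fintype.card α)) * Ch.length := card_biUnion_le.trans
        (sum_le_sum fun Ch hCh => card_shortcutsAlong_le (hnd Ch hCh).length_le_card d)
    _ = 8 * (1 + logStar (Fintype.card α)) * ∑ Ch ∈ s, Ch.length := (mul_sum _ _ _).symm
    _ ≤ 8 * (1 + logStar (Fintype.card α)) * Fintype.card α :=
        Nat.mul_le_mul_left _ (sum_length_le_card_of_pairwise_disjoint hnd hdisj)
    _ = 8 * Fintype.card α * (1 + logStar (Fintype.card α)) := by ring

end Chains

/-- **super-shortcutting.** There is an absolute constant `C > 0` such that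
for every DAG `G` on `n ≥ 2` vertices and every set `𝒞` of pairwise vertex-disjoint chains
of `G`, there is a set `H ⊆ TC(G)` with `|H| ≤ C·n·(1 + log* n)` such that for every chain
`C ∈ 𝒞` and all `u, v ∈ C` with `u` occurring before `v` on `C`, `dist_{G∪H}(u,v) ≤ 4`. -/
theorem supershortcut_chains :
    ∃ C : ℝ, 0 < C ∧
      ∀ n : ℕ, 2 ≤ n → ∀ E : Set (Edge n), IsDAG E →
        ∀ 𝒞 : Set (List (Fin n)), (∀ Ch ∈ 𝒞, IsChainIn E Ch) →
          (∀ C₁ ∈ 𝒞, ∀ C₂ ∈ 𝒞, C₁ ≠ C₂ → ∀ x : Fin n, x ∈ C₁ → x ∉ C₂) →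
          ∃ H : Set (Edge n), H ⊆ TCset E ∧
            (H.ncard : ℝ) ≤ C * n * (1 + logStar n) ∧
            ∀ Ch ∈ 𝒞, ∀ i j : ℕ, i < j → ∀ u v : Fin n,
              Ch[i]? = some u → Ch[j]? = some v →
              hdist (E ∪ H) u v ≤ (4 : ℕ∞) := by
  refine ⟨8, by norm_num, fun n hn E hD 𝒞 hchain hdisj => ?_⟩
  have hfin : 𝒞.Finite := (List.finite_length_le (Fin n) n).subset fun Ch hCh => by
    simpa using (hchain Ch hCh).1.length_le_card
  let d : Fin n := ⟨0, by omega⟩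
  let H := hfin.toFinset.biUnion fun Ch => shortcutsAlong Ch d
  have hHE : ↑H ⊆ TCset E := by
    simpa [H] using fun Ch hCh => shortcutsAlong_subset_TCset hD (hchain Ch hCh) _
  refine ⟨H, hHE, ?_, fun Ch hCh i j hij u v hu hv => ?_⟩
  · have hdisj' : (hfin.toFinset : Set (List (Fin n))).Pairwise List.Disjoint := by
      rw [hfin.coe_toFinset]
      exact fun C₁ h₁ C₂ h₂ hne x => hdisj C₁ h₁ C₂ h₂ hne x
    have := card_biUnion_shortcutsAlong_le
      (fun Ch hCh => (hchain Ch (hfin.mem_toFinset.1 hCh)).1) hdisj' d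
    rw [Set.ncard_coe_finset]
    simpa using (Nat.cast_le (α := ℝ)).2 this
  obtain ⟨hj, rfl⟩ := List.getElem?_eq_some_iff.1 hv
  obtain ⟨hi, rfl⟩ := List.getElem?_eq_some_iff.1 hu
  refine (hD.union_of_subset_TCset hHE).hdist_le_of_reachWithin
    ((reachWithin_shortcutsAlong d hij hj).mono (Set.subset_union_of_subset_right ?_ E))
  exact coe_subset.2
    (subset_biUnion_of_mem (fun Ch => shortcutsAlong Ch d) (hfin.mem_toFinset.2 hCh))
end

section
/- There is an absolute constant c > 0 with the following property. Let G be a directed graph on n vertices, let β ≥ 1 be an integer, and suppose the maximum of dist_G(s, t) over all pairs (s, t) ∈ TC(G) equals L, where L ≥ 9β and L ≥ 18. Then there exists a pair (u, v) ∈ TC(G) such that Δ((u, v) | ∅) ≥ c · L³, i.e., adding the single shortcut edge (u, v) to G decreases the potential (taken with respect to hopbound parameter β) by at least c · L³. -/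
open scoped Classical

/-- The potential `φ(H)`: the sum of `dist_{G∪H}(s,t)` over all pairs `(s,t)` in the
transitive closure of `G` with `dist_{G∪H}(s,t) ≥ β`. -/
noncomputable def potential {n : ℕ} (E H : Set (Edge n)) (β : ℕ) : ℕ :=
  ∑ p : Edge n,
    if TCrel E p.1 p.2 ∧ (β : ℕ∞) ≤ hdist (E ∪ H) p.1 p.2
    then (hdist (E ∪ H) p.1 p.2).toNat else 0

/-- `Δ((u,v) | H) = φ(H) - φ(H ∪ {(u,v)})`. -/
noncomputable def pdelta {n : ℕ} (E H : Set (Edge n)) (β : ℕ) (e : Edge n) : ℕ :=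
  potential E H β - potential E (H ∪ {e}) β


open List in
lemma exists_dup_decomp {α : Type*} : ∀ (l : List α), ¬ l.Nodup →
    ∃ (a : List α) (x : α) (b c : List α), l = a ++ x :: (b ++ x :: c)
  | [], h => absurd List.nodup_nil h
  | (y :: t), h => by
    by_cases hy : y ∈ t
    · obtain ⟨b, c, rfl⟩ := List.append_of_mem hy
      exact ⟨[], y, b, c, rfl⟩
    · have ht : ¬ t.Nodup := fun hn => h (List.nodup_cons.mpr ⟨hy, hn⟩)
      obtain ⟨a, x, b, c, rfl⟩ := exists_dup_decomp t ht
      exact ⟨y :: a, x, b, c, rfl⟩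

open List in
lemma walk_to_path_aux {α : Type*} (R : α → α → Prop) :
    ∀ (N : ℕ) (l : List α), l.length ≤ N → l.Chain' R → ∃ l' : List α, l'.Nodup ∧ l'.Chain' R ∧
      l'.head? = l.head? ∧ l'.getLast? = l.getLast? ∧ l'.length ≤ l.length := by
  intro N
  induction N with
  | zero =>
    intro l hlen _
    have : l = [] := List.length_eq_zero_iff.mp (Nat.le_zero.mp hlen)
    subst this
    exact ⟨[], nodup_nil, isChain_nil, rfl, rfl, le_rfl⟩
  | succ N ih =>
    intro l hlen hl
    by_cases hnd : l.Nodup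
    · exact ⟨l, hnd, hl, rfl, rfl, le_rfl⟩
    obtain ⟨a, x, b, c, rfl⟩ := exists_dup_decomp l hnd
    -- chain facts
    have h1 : Chain' R a ∧ Chain' R (x :: (b ++ x :: c)) ∧
        ∀ y ∈ a.getLast?, ∀ z ∈ (x :: (b ++ x :: c)).head?, R y z := by
      simpa [List.Chain', List.isChain_append] using hl
    have h2 : Chain' R (x :: c) := by
      have : Chain' R ((x :: b) ++ (x :: c)) := by simpa using h1.2.1
      exact (List.isChain_append.mp this).2.1
    have hch : Chain' R (a ++ x :: c) := by
      rw [List.Chain', List.isChain_append]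
      refine ⟨h1.1, h2, ?_⟩
      intro y hy z hz
      simp only [head?_cons, Option.mem_def, Option.some.injEq] at hz
      subst hz
      exact h1.2.2 y hy x (by simp)
    have hlen' : (a ++ x :: c).length ≤ N := by
      simp only [List.length_append, List.length_cons] at hlen ⊢
      omega
    obtain ⟨l', hnd', hch', hh', hl', hle'⟩ := ih (a ++ x :: c) hlen' hch
    refine ⟨l', hnd', hch', ?_, ?_, ?_⟩
    · rw [hh']; simp [List.head?_append]
    · rw [hl']
      simp only [List.getLast?_append]
      have : (x :: (b ++ x :: c)).getLast? = (x :: c).getLast? := by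
        have : x :: (b ++ x :: c) = (x :: b) ++ (x :: c) := by simp
        rw [this, List.getLast?_append]
        simp [List.getLast?_eq_getElem?]
      rw [this]
    · simp only [List.length_append, List.length_cons] at hle' ⊢
      omega

open List in
lemma walk_to_path {α : Type*} (R : α → α → Prop) (l : List α) (hl : l.Chain' R) :
    ∃ l' : List α, l'.Nodup ∧ l'.Chain' R ∧
      l'.head? = l.head? ∧ l'.getLast? = l.getLast? ∧ l'.length ≤ l.length :=
  walk_to_path_aux R l.length l le_rfl hl

lemma hdist_le_of_walk {n : ℕ} (E : Set (Edge n)) (u v : Fin n) (l : List (Fin n))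
    (hch : l.Chain' (fun a b => (a, b) ∈ E)) (hh : l.head? = some u)
    (hl : l.getLast? = some v) :
    hdist E u v ≤ ((l.length - 1 : ℕ) : ℕ∞) := by
  obtain ⟨l', hnd', hch', hh', hl', hle'⟩ := walk_to_path _ l hch
  have hne : l' ≠ [] := by
    intro h; rw [h] at hh'; rw [hh] at hh'; simp at hh'
  have hpos : 1 ≤ l'.length := List.length_pos_iff.mpr hne
  have hmem : ((l'.length - 1 : ℕ) : ℕ∞) ∈
      {k : ℕ∞ | ∃ l : List (Fin n), IsPathFromTo E u v l ∧ (l.length : ℕ∞) = k + 1} := by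
    refine ⟨l', ⟨⟨hnd', hch'⟩, hh'.trans hh, hl'.trans hl⟩, ?_⟩
    rw [show l'.length = (l'.length - 1) + 1 from by omega]
    push_cast
    ring
  calc hdist E u v ≤ ((l'.length - 1 : ℕ) : ℕ∞) := sInf_le hmem
    _ ≤ ((l.length - 1 : ℕ) : ℕ∞) := Nat.cast_le.mpr (by omega)

lemma hdist_exists_path {n : ℕ} (E : Set (Edge n)) (u v : Fin n) (l0 : List (Fin n))
    (h0 : IsPathFromTo E u v l0) :
    ∃ l : List (Fin n), IsPathFromTo E u v l ∧ (l.length : ℕ∞) = hdist E u v + 1 := by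
  have hne : {k : ℕ∞ | ∃ l : List (Fin n), IsPathFromTo E u v l ∧ (l.length : ℕ∞) = k + 1}.Nonempty := by
    have hne0 : l0 ≠ [] := by
      intro h; rw [h] at h0; simp [IsPathFromTo] at h0
    have hpos := List.length_pos_iff.mpr hne0
    exact ⟨((l0.length - 1 : ℕ) : ℕ∞), l0, h0, by
      rw [show l0.length = (l0.length - 1) + 1 from by omega]
      push_cast
      ring⟩
  have := csInf_mem hne
  exact this

lemma hdist_anti {n : ℕ} {E E' : Set (Edge n)} (h : E ⊆ E') (u v : Fin n) :
    hdist E' u v ≤ hdist E u v := by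
  apply sInf_le_sInf
  rintro k ⟨l, ⟨⟨hnd, hch⟩, hh, hl⟩, hlen⟩
  exact ⟨l, ⟨⟨hnd, hch.imp fun a b hab => h hab⟩, hh, hl⟩, hlen⟩



lemma chain'_take {α : Type*} {R : α → α → Prop} {l : List α} (h : l.Chain' R) (m : ℕ) :
    (l.take m).Chain' R := by
  rw [← List.take_append_drop m l] at h
  exact (List.isChain_append.mp h).1

lemma chain'_drop {α : Type*} {R : α → α → Prop} {l : List α} (h : l.Chain' R) (m : ℕ) :
    (l.drop m).Chain' R := by
  rw [← List.take_append_drop m l] at h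
  exact (List.isChain_append.mp h).2.1

lemma segment_spec {α : Type*} {R : α → α → Prop} (l : List α)
    (hch : l.Chain' R) (i j : ℕ) (hij : i ≤ j) (hj : j < l.length) :
    ∃ seg : List α, seg.Sublist l ∧ seg.Chain' R ∧
      seg.head? = l[i]? ∧ seg.getLast? = l[j]? ∧ seg.length = j - i + 1 := by
  refine ⟨(l.drop i).take (j - i + 1), ?_, ?_, ?_, ?_, ?_⟩
  · exact (List.take_sublist _ _).trans (List.drop_sublist _ _)
  · exact chain'_take (chain'_drop hch i) _
  · rw [List.head?_eq_getElem?, List.getElem?_take, List.getElem?_drop]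
    simp
  · have hlen : ((l.drop i).take (j - i + 1)).length = j - i + 1 := by
      rw [List.length_take, List.length_drop]; omega
    rw [List.getLast?_eq_getElem?, hlen, List.getElem?_take, List.getElem?_drop]
    have : i + (j - i + 1 - 1) = j := by omega
    rw [this]
    simp
  · rw [List.length_take, List.length_drop]; omega


/-- There is an absolute constant `c > 0` such that for every directed
graph on `n` vertices, every integer `β ≥ 1`, if the maximum of `dist_G(s,t)` over all
`(s,t) ∈ TC(G)` equals `L` with `L ≥ 9β` and `L ≥ 18`, then some `(u,v) ∈ TC(G)` has
`Δ((u,v) | ∅) ≥ c·L³`. -/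
theorem single_edge_big_potential_drop :
    ∃ c : ℝ, 0 < c ∧
      ∀ (n : ℕ) (E : Set (Edge n)) (β L : ℕ), 1 ≤ β → 9 * β ≤ L → 18 ≤ L →
        (∀ p ∈ TCset E, hdist E p.1 p.2 ≤ (L : ℕ∞)) →
        (∃ p ∈ TCset E, hdist E p.1 p.2 = (L : ℕ∞)) →
        ∃ e ∈ TCset E, (pdelta E ∅ β e : ℝ) ≥ c * (L : ℝ) ^ 3 := by
  classical
  refine ⟨1/100, by norm_num, ?_⟩
  intro n E β L hβ hLβ hL18 hmax hexmax
  obtain ⟨p₀, hp₀TC, hp₀L⟩ := hexmax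
  obtain ⟨hne0, l0, hl0⟩ := hp₀TC
  obtain ⟨l, ⟨⟨hnd, hch⟩, hhead, hlast⟩, hlenE⟩ := hdist_exists_path E p₀.1 p₀.2 l0 hl0
  rw [hp₀L] at hlenE
  have hlen : l.length = L + 1 := by exact_mod_cast hlenE
  -- the vertices along the path
  have hget : ∀ k, k ≤ L → k < l.length := by omega
  set x : ℕ → Fin n := fun k => l.get ⟨min k L, by rw [hlen]; omega⟩ with hxdef
  have hx : ∀ k, k ≤ L → l[k]? = some (x k) := by
    intro k hk
    have hk' : k < l.length := by omega
    rw [List.getElem?_eq_getElem hk']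
    simp only [hxdef, List.get_eq_getElem, min_eq_left hk]
  have hxinj : ∀ i j, i ≤ L → j ≤ L → x i = x j → i = j := by
    intro i j hi hj hxy
    simp only [hxdef] at hxy
    have h2 := (hnd.get_inj_iff).mp hxy
    rw [Fin.mk.injEq] at h2
    omega
  have hedge : ∀ k, k < L → (x k, x (k + 1)) ∈ E := by
    intro k hk
    have h1 := List.isChain_iff_getElem.mp hch k (by omega)
    have e1 : l[min k L]'(by omega) = l[k]'(by omega) := by congr 1; omega
    have e2 : l[min (k+1) L]'(by omega) = l[k+1]'(by omega) := by congr 1; omega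
    simp only [hxdef, List.get_eq_getElem]
    rw [e1, e2]
    exact h1
  have hx0 : x 0 = p₀.1 := by
    have h1 := hx 0 (by omega)
    rw [← List.head?_eq_getElem?] at h1
    rw [hhead] at h1
    exact (Option.some_inj.mp h1).symm
  have hxL : x L = p₀.2 := by
    have h1 := hx L le_rfl
    have h2 : l.getLast? = l[L]? := by
      rw [List.getLast?_eq_getElem?]
      congr 1
      omega
    rw [h2, h1] at hlast
    exact Option.some_inj.mp hlast
  -- transitive closure membership for pairs on the path
  have htc : ∀ i j, i < j → j ≤ L → (x i, x j) ∈ TCset E := by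
    intro i j hij hjL
    obtain ⟨seg, hsub, hchs, hsh, hsl, hslen⟩ := segment_spec l hch i j (le_of_lt hij) (by omega)
    refine ⟨fun h => by have := hxinj i j (by omega) hjL h; omega, seg, ⟨⟨hsub.nodup hnd, hchs⟩, ?_, ?_⟩⟩
    · rw [hsh]; exact hx i (by omega)
    · rw [hsl]; exact hx j hjL
  -- upper bound on distances along the path
  have hub : ∀ i j, i ≤ j → j ≤ L → hdist E (x i) (x j) ≤ ((j - i : ℕ) : ℕ∞) := by
    intro i j hij hjL
    obtain ⟨seg, hsub, hchs, hsh, hsl, hslen⟩ := segment_spec l hch i j hij (by omega)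
    have := hdist_le_of_walk E (x i) (x j) seg hchs (by rw [hsh]; exact hx i (by omega))
      (by rw [hsl]; exact hx j hjL)
    rw [hslen] at this
    simpa using this
  -- lower bound on distances along the path
  have hlb : ∀ i j, i ≤ j → j ≤ L → ((j - i : ℕ) : ℕ∞) ≤ hdist E (x i) (x j) := by
    intro i j hij hjL
    rcases Nat.eq_or_lt_of_le hij with rfl | hij'
    · simp
    have htcij := htc i j hij' hjL
    have hdfin : hdist E (x i) (x j) ≤ (L : ℕ∞) := hmax (x i, x j) htcij
    have hdne : hdist E (x i) (x j) ≠ ⊤ := by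
      intro h; rw [h] at hdfin; simp at hdfin
    obtain ⟨hxne, seg0, hseg0⟩ := htcij
    obtain ⟨q, ⟨⟨hqnd, hqch⟩, hqh, hql⟩, hqlenE⟩ := hdist_exists_path E (x i) (x j) seg0 hseg0
    set dn : ℕ := (hdist E (x i) (x j)).toNat with hdndef
    have hdeq : hdist E (x i) (x j) = (dn : ℕ∞) := (ENat.coe_toNat hdne).symm
    rw [hdeq] at hqlenE
    have hqlen : q.length = dn + 1 := by exact_mod_cast hqlenE
    -- build the walk  l.take i ++ (q ++ l.drop (j+1))
    set w : List (Fin n) := l.take i ++ (q ++ l.drop (j + 1)) with hwdef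
    have hqne : q ≠ [] := by intro h; rw [h] at hqh; simp at hqh
    have hchw : w.Chain' (fun a b => (a, b) ∈ E) := by
      rw [hwdef, List.Chain', List.isChain_append]
      refine ⟨chain'_take hch i, ?_, ?_⟩
      · rw [List.isChain_append]
        refine ⟨hqch, chain'_drop hch (j + 1), ?_⟩
        intro y hy z hz
        rw [hql] at hy
        simp only [Option.mem_def, Option.some.injEq] at hy
        subst hy
        rw [List.head?_drop] at hz
        by_cases hjL' : j = L
        · subst hjL'
          rw [List.getElem?_eq_none (by omega)] at hz
          simp at hz
        · have h1 : l[j+1]? = some (x (j+1)) := hx (j+1) (by omega)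
          rw [h1] at hz
          simp only [Option.mem_def, Option.some.injEq] at hz
          subst hz
          exact hedge j (by omega)
      · intro y hy z hz
        by_cases hi0 : i = 0
        · subst hi0; simp at hy
        · have h1 : (l.take i).getLast? = some (x (i - 1)) := by
            rw [List.getLast?_eq_getElem?, List.length_take, List.getElem?_take]
            have hmin : min i l.length = i := by omega
            rw [hmin, if_pos (by omega)]
            exact hx (i - 1) (by omega)
          rw [h1] at hy
          simp only [Option.mem_def, Option.some.injEq] at hy
          subst hy
          rw [List.head?_append, hqh] at hz
          simp only [Option.some_or, Option.mem_def, Option.some.injEq] at hz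
          subst hz
          have h2 := hedge (i - 1) (by omega)
          rwa [Nat.sub_add_cancel (by omega)] at h2
    have hwh : w.head? = some (x 0) := by
      rw [hwdef, List.head?_append]
      by_cases hi0 : i = 0
      · subst hi0
        simp only [List.take_zero, List.head?_nil, Option.none_or]
        rw [List.head?_append, hqh]
        simp
      · have h1 : (l.take i).head? = some (x 0) := by
          rw [List.head?_eq_getElem?, List.getElem?_take, if_pos (by omega)]
          exact hx 0 (by omega)
        rw [h1]
        simp
    have hwl : w.getLast? = some (x L) := by
      rw [hwdef, List.getLast?_append, List.getLast?_append]
      by_cases hjL' : j = L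
      · have hdnil : l.drop (j + 1) = [] := List.drop_eq_nil_of_le (by omega)
        rw [hdnil, hql]
        simp [hjL']
      · have h1 : (l.drop (j+1)).getLast? = some (x L) := by
          rw [List.getLast?_eq_getElem?, List.length_drop, List.getElem?_drop]
          have : j + 1 + (l.length - (j + 1) - 1) = L := by omega
          rw [this]
          exact hx L le_rfl
        rw [h1]
        simp
    have hwlen : w.length = i + (dn + 1) + (L - j) := by
      rw [hwdef]
      simp only [List.length_append, List.length_take, List.length_drop, hqlen]
      omega
    have hkey := hdist_le_of_walk E (x 0) (x L) w hchw hwh hwl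
    rw [hx0, hxL, hp₀L, hwlen] at hkey
    have hkey' : L ≤ i + (dn + 1) + (L - j) - 1 := by exact_mod_cast hkey
    rw [hdeq]
    have : j - i ≤ dn := by omega
    exact_mod_cast this
  have heq : ∀ i j, i ≤ j → j ≤ L → hdist E (x i) (x j) = ((j - i : ℕ) : ℕ∞) := fun i j h1 h2 =>
    le_antisymm (hub i j h1 h2) (hlb i j h1 h2)
  -- parameters
  set m : ℕ := L / 3 with hmdef
  have hm1 : 3 * m ≤ L := by omega
  have hm2 : L ≤ 3 * m + 2 := by omega
  have hm6 : 6 ≤ m := by omega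
  have hmβ : 3 * β ≤ m := by omega
  set e : Edge n := (x m, x (2 * m)) with hedef
  have he : e ∈ TCset E := htc m (2 * m) (by omega) (by omega)
  refine ⟨e, he, ?_⟩
  -- distances after adding the shortcut
  have hnew : ∀ i j, i ≤ m → 2 * m ≤ j → j ≤ L →
      hdist (E ∪ {e}) (x i) (x j) ≤ ((j - i - m + 1 : ℕ) : ℕ∞) := by
    intro i j him hjm hjL
    obtain ⟨s1, hsub1, hchs1, hsh1, hsl1, hslen1⟩ := segment_spec l hch i m him (by omega)
    obtain ⟨s2, hsub2, hchs2, hsh2, hsl2, hslen2⟩ := segment_spec l hch (2*m) j hjm (by omega)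
    have hchw : (s1 ++ s2).Chain' (fun a b => (a, b) ∈ E ∪ {e}) := by
      rw [List.Chain', List.isChain_append]
      refine ⟨hchs1.imp fun a b hab => Or.inl hab, hchs2.imp fun a b hab => Or.inl hab, ?_⟩
      intro y hy z hz
      rw [hsl1] at hy
      have h2 : l[m]? = some (x m) := hx m (by omega)
      rw [h2] at hy
      rw [hsh2] at hz
      have h3 : l[2*m]? = some (x (2*m)) := hx (2*m) (by omega)
      rw [h3] at hz
      simp only [Option.mem_def, Option.some.injEq] at hy hz
      subst hy; subst hz
      exact Or.inr rfl
    have hwh : (s1 ++ s2).head? = some (x i) := by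
      rw [List.head?_append, hsh1, hx i (by omega)]
      simp
    have hwl : (s1 ++ s2).getLast? = some (x j) := by
      rw [List.getLast?_append, hsl2, hx j hjL]
      simp
    have hkey := hdist_le_of_walk (E ∪ {e}) (x i) (x j) (s1 ++ s2) hchw hwh hwl
    rw [List.length_append, hslen1, hslen2] at hkey
    have harith : m - i + 1 + (j - 2*m + 1) - 1 = j - i - m + 1 := by omega
    rwa [harith] at hkey
  -- the two potential functions
  set f : Edge n → ℕ := fun p =>
    if TCrel E p.1 p.2 ∧ (β : ℕ∞) ≤ hdist E p.1 p.2 then (hdist E p.1 p.2).toNat else 0 with hfdef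
  set g : Edge n → ℕ := fun p =>
    if TCrel E p.1 p.2 ∧ (β : ℕ∞) ≤ hdist (E ∪ {e}) p.1 p.2
    then (hdist (E ∪ {e}) p.1 p.2).toNat else 0 with hgdef
  have hpot0 : potential E ∅ β = ∑ p : Edge n, f p := by
    unfold potential
    simp only [Set.union_empty, hfdef]
  have hpot1 : potential E (∅ ∪ {e}) β = ∑ p : Edge n, g p := by
    unfold potential
    simp only [Set.empty_union, hgdef]
  have hfin : ∀ p : Edge n, TCrel E p.1 p.2 → hdist E p.1 p.2 ≠ ⊤ := by
    intro p hp h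
    have := hmax p hp
    rw [h] at this
    simp at this
  have hgf : ∀ p : Edge n, g p ≤ f p := by
    intro p
    simp only [hfdef, hgdef]
    by_cases hc : TCrel E p.1 p.2 ∧ (β : ℕ∞) ≤ hdist (E ∪ {e}) p.1 p.2
    · have hmono := hdist_anti (Set.subset_union_left (s := E) (t := {e})) p.1 p.2
      rw [if_pos hc, if_pos ⟨hc.1, le_trans hc.2 hmono⟩]
      exact ENat.toNat_le_toNat hmono (hfin p hc.1)
    · rw [if_neg hc]
      exact Nat.zero_le _
  -- index set of good pairs
  set T : Finset (ℕ × ℕ) := Finset.range (m + 1) ×ˢ Finset.Icc (2 * m) L with hTdef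
  set S : Finset (Edge n) := T.image (fun q => (x q.1, x q.2)) with hSdef
  have hTmem : ∀ q ∈ T, q.1 ≤ m ∧ 2 * m ≤ q.2 ∧ q.2 ≤ L := by
    intro q hq
    simp only [hTdef, Finset.mem_product, Finset.mem_range, Finset.mem_Icc] at hq
    omega
  have hinj : Set.InjOn (fun q : ℕ × ℕ => ((x q.1, x q.2) : Edge n)) T := by
    intro q hq q' hq' hqq
    have h1 := hTmem q hq
    have h2 := hTmem q' hq'
    simp only [Prod.mk.injEq] at hqq
    have e1 := hxinj q.1 q'.1 (by omega) (by omega) hqq.1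
    have e2 := hxinj q.2 q'.2 (by omega) (by omega) hqq.2
    exact Prod.ext e1 e2
  have hScard : S.card = (m + 1) * (L - 2 * m + 1) := by
    rw [hSdef, Finset.card_image_of_injOn hinj, hTdef, Finset.card_product,
      Finset.card_range, Nat.card_Icc]
    congr 1
    omega
  -- per-pair drop
  have hdrop : ∀ p ∈ S, m - 1 ≤ f p - g p := by
    intro p hp
    rw [hSdef, Finset.mem_image] at hp
    obtain ⟨q, hq, rfl⟩ := hp
    obtain ⟨h1, h2, h3⟩ := hTmem q hq
    set i := q.1
    set j := q.2
    have htcij := htc i j (by omega) h3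
    have hdij : hdist E (x i) (x j) = ((j - i : ℕ) : ℕ∞) := heq i j (by omega) h3
    have hβij : (β : ℕ∞) ≤ hdist E (x i) (x j) := by
      rw [hdij]
      exact Nat.cast_le.mpr (by omega)
    have hf : f (x i, x j) = j - i := by
      simp only [hfdef]
      rw [if_pos ⟨htcij, hβij⟩, hdij, ENat.toNat_coe]
    by_cases hc : TCrel E (x i) (x j) ∧ (β : ℕ∞) ≤ hdist (E ∪ {e}) (x i) (x j)
    · have hg : g (x i, x j) ≤ j - i - m + 1 := by
        simp only [hgdef]
        rw [if_pos hc]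
        have := hnew i j h1 h2 h3
        have h4 := ENat.toNat_le_toNat this (ENat.coe_ne_top _)
        rwa [ENat.toNat_coe] at h4
      have := hgf (x i, x j)
      omega
    · have hg : g (x i, x j) = 0 := by simp only [hgdef]; rw [if_neg hc]
      rw [hf, hg]
      omega
  -- put it together
  have hsum : (m + 1) * (L - 2 * m + 1) * (m - 1) ≤ pdelta E ∅ β e := by
    unfold pdelta
    rw [hpot0, hpot1, ← Finset.sum_tsub_distrib Finset.univ (fun p _ => hgf p)]
    calc (m + 1) * (L - 2 * m + 1) * (m - 1) = S.card * (m - 1) := by rw [hScard]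
      _ = S.card • (m - 1) := by rw [smul_eq_mul]
      _ ≤ ∑ p ∈ S, (f p - g p) := Finset.card_nsmul_le_sum S _ _ hdrop
      _ ≤ ∑ p : Edge n, (f p - g p) :=
          Finset.sum_le_sum_of_subset (Finset.subset_univ S)
  -- final numeric inequality
  have hsub1 : 2 * m ≤ L := by omega
  have hsub2 : 1 ≤ m := by omega
  have hcast : ((m : ℝ) + 1) * ((L : ℝ) - 2 * m + 1) * ((m : ℝ) - 1) ≤ (pdelta E ∅ β e : ℝ) := by
    have h := (Nat.cast_le (α := ℝ)).mpr hsum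
    push_cast [Nat.cast_sub hsub1, Nat.cast_sub hsub2] at h
    linarith
  have hM6 : (6 : ℝ) ≤ (m : ℝ) := by exact_mod_cast hm6
  have hML : (L : ℝ) ≤ 3 * (m : ℝ) + 2 := by exact_mod_cast hm2
  have hLM : 3 * (m : ℝ) ≤ (L : ℝ) := by exact_mod_cast hm1
  have hL0 : (0 : ℝ) ≤ (L : ℝ) := Nat.cast_nonneg L
  rw [ge_iff_le]
  have h1 : (L : ℝ) ^ 3 ≤ (3 * (m : ℝ) + 2) ^ 3 := pow_le_pow_left₀ hL0 hML 3
  have h2 : ((m : ℝ) + 1) * ((m : ℝ) + 1) * ((m : ℝ) - 1) ≤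
      ((m : ℝ) + 1) * ((L : ℝ) - 2 * m + 1) * ((m : ℝ) - 1) := by
    nlinarith [mul_nonneg (mul_nonneg (by linarith : (0 : ℝ) ≤ (m : ℝ) + 1)
      (by linarith : (0 : ℝ) ≤ (m : ℝ) - 1)) (by linarith : (0 : ℝ) ≤ (L : ℝ) - 3 * m)]
  have h3 : (3 * (m : ℝ) + 2) ^ 3 ≤ 100 * (((m : ℝ) + 1) * ((m : ℝ) + 1) * ((m : ℝ) - 1)) := by
    nlinarith [mul_nonneg (sub_nonneg.mpr hM6) (sq_nonneg (m : ℝ)),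
      mul_nonneg (sub_nonneg.mpr hM6) (by linarith : (0 : ℝ) ≤ (m : ℝ))]
  calc (1 / 100 : ℝ) * (L : ℝ) ^ 3
      ≤ ((m : ℝ) + 1) * ((L : ℝ) - 2 * m + 1) * ((m : ℝ) - 1) := by linarith
    _ ≤ (pdelta E ∅ β e : ℝ) := hcast
end
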